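/- arXiv:1008.4563 — 8 statements merged into one kernel-verified Lean document; each statement's English description precedes it below -/
import Mathlib

section
/- Let G be a finite simple graph and let A and B be independent sets of G with |A| = |B| = s. Then A and B are TJ-reconfigurable if and only if A and B are TAR(s)-reconfigurable. -/
variable {V : Type*} [DecidableEq V]

/-- `A` is an independent set of the graph `G`. -/
def IsIndep (G : SimpleGraph V) (A : Finset V) : Prop :=
  ∀ u ∈ A, ∀ v ∈ A, ¬G.Adj u v

/-- Two independent sets are TJ-adjacent (differ by one token jump). -/
def TJAdj (A B : Finset V) : Prop :=
  A.card = B.card ∧ (A \ B).card = 1 ∧ (B \ A).card = 1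

/-- There is a TJ-reconfiguration sequence of length `ℓ` from `A` to `B` in `G`. -/
def TJSeq (G : SimpleGraph V) (A B : Finset V) (ℓ : ℕ) : Prop :=
  ∃ ρ : ℕ → Finset V, ρ 0 = A ∧ ρ ℓ = B ∧ (∀ i ≤ ℓ, IsIndep G (ρ i)) ∧
    ∀ i < ℓ, TJAdj (ρ i) (ρ (i + 1))

/-- One TAR step: addition or removal of exactly one vertex. -/
def TARStep (A B : Finset V) : Prop :=
  (∃ v ∉ A, B = insert v A) ∨ (∃ v ∈ A, B = A.erase v)

/-- `ρ 0, …, ρ r` is a TAR(k)-reconfiguration sequence from `A` to `B` in `G`: all its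
members are independent sets of size at least `k - 1`, and consecutive members differ by
the addition or the removal of exactly one vertex. -/
def TARSeqFun (G : SimpleGraph V) (k : ℕ) (ρ : ℕ → Finset V) (r : ℕ)
    (A B : Finset V) : Prop :=
  ρ 0 = A ∧ ρ r = B ∧ (∀ i ≤ r, IsIndep G (ρ i) ∧ k - 1 ≤ (ρ i).card) ∧
    ∀ i < r, TARStep (ρ i) (ρ (i + 1))

/-- There is a TAR(k)-reconfiguration sequence of length `r` from `A` to `B` in `G`. -/
def TARSeq (G : SimpleGraph V) (k : ℕ) (A B : Finset V) (r : ℕ) : Prop :=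
  ∃ ρ : ℕ → Finset V, TARSeqFun G k ρ r A B


/-!
A token jump `S → insert v (S.erase u)` is the pair of TAR moves "remove `u`, add `v`", which
passes only through a set of size `|S| - 1`. Conversely, along a TAR(s)-sequence from `A` every
member `X` stays within one token of an `s`-set `T` that is TJ-reachable from `A`: either `T ⊆ X`,
or `T = insert u X` and `|X| = s - 1`. An addition or a removal restores this with at most one
jump (a removed vertex of `T` is exchanged for a vertex of `X` outside `T` while `|X| > s`), and
at the end `|B| = s` forces `T = B`.
-/

open Relation Finset

theorem exists_seq_iff_reflTransGen {α : Type*} {P : α → Prop} {R : α → α → Prop} {a b : α} :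
    (∃ ℓ, ∃ ρ : ℕ → α, ρ 0 = a ∧ ρ ℓ = b ∧ (∀ i ≤ ℓ, P (ρ i)) ∧
      ∀ i < ℓ, R (ρ i) (ρ (i + 1))) ↔
    P a ∧ ReflTransGen (fun x y => R x y ∧ P y) a b := by
  constructor
  · rintro ⟨ℓ, ρ, rfl, rfl, hP, hR⟩
    refine ⟨hP 0 (Nat.zero_le _), ?_⟩
    induction ℓ with
    | zero => exact .refl
    | succ ℓ ih =>
      exact (ih (fun i hi => hP i (by omega)) fun i hi => hR i (by omega)).tail
        ⟨hR ℓ (by omega), hP _ le_rfl⟩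
  · rintro ⟨ha, h⟩
    induction h with
    | refl =>
      exact ⟨0, fun _ => a, rfl, rfl, fun _ _ => ha, fun _ h => absurd h (Nat.not_lt_zero _)⟩
    | @tail b c _ hbc ih =>
      obtain ⟨ℓ, ρ, h0, hℓ, hP, hR⟩ := ih
      refine ⟨ℓ + 1, fun i => if i ≤ ℓ then ρ i else c, by simpa using h0, by simp, ?_, ?_⟩
      · intro i hi
        by_cases h : i ≤ ℓ
        · simpa [h] using hP i h
        · simpa [h] using hbc.2
      · intro i hi
        rcases Nat.lt_or_eq_of_le (Nat.le_of_lt_succ hi) with hi | rfl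
        · simpa [hi.le, Nat.succ_le_of_lt hi] using hR i hi
        · simpa [hℓ] using hbc.1

section

variable {V : Type*} {G : SimpleGraph V} {k s : ℕ} {A B S T X Y : Finset V}

theorem IsIndep.mono (hT : IsIndep G T) (hST : S ⊆ T) : IsIndep G S :=
  fun u hu v hv => hT u (hST hu) v (hST hv)

variable [DecidableEq V]

theorem tjAdj_iff : TJAdj S T ↔ ∃ u ∈ S, ∃ v ∉ S, T = insert v (S.erase u) := by
  constructor
  · rintro ⟨-, hST, hTS⟩
    obtain ⟨u, hu⟩ := card_eq_one.1 hST
    obtain ⟨v, hv⟩ := card_eq_one.1 hTS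
    have hu' := Finset.ext_iff.1 hu
    have hv' := Finset.ext_iff.1 hv
    simp only [mem_sdiff, mem_singleton] at hu' hv'
    refine ⟨u, ((hu' u).2 rfl).1, v, ((hv' v).2 rfl).2, ?_⟩
    ext x
    simp only [mem_insert, mem_erase]
    grind
  · rintro ⟨u, hu, v, hv, rfl⟩
    have hvu : v ∉ S.erase u := fun h => hv (mem_of_mem_erase h)
    have hSd : S \ insert v (S.erase u) = {u} := by
      ext x; simp only [mem_sdiff, mem_insert, mem_erase, mem_singleton]; grind
    have hdS : insert v (S.erase u) \ S = {v} := by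
      ext x; simp only [mem_sdiff, mem_insert, mem_erase, mem_singleton]; grind
    refine ⟨?_, by simp [hSd], by simp [hdS]⟩
    rw [card_insert_of_notMem hvu, card_erase_add_one hu]

theorem tjAdj_insert_insert {u v : V} (hu : u ∉ X) (hv : v ∉ X) (huv : u ≠ v) :
    TJAdj (insert u X) (insert v X) :=
  tjAdj_iff.2 ⟨u, mem_insert_self u X, v, by simp [hv, Ne.symm huv], by rw [erase_insert hu]⟩

variable (G k)

def TJMove (S T : Finset V) : Prop :=
  TJAdj S T ∧ IsIndep G T

def TARMove (S T : Finset V) : Prop :=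
  TARStep S T ∧ IsIndep G T ∧ k - 1 ≤ T.card

theorem exists_tjSeq_iff : (∃ ℓ, TJSeq G A B ℓ) ↔ IsIndep G A ∧ ReflTransGen (TJMove G) A B :=
  exists_seq_iff_reflTransGen

theorem exists_tarSeq_iff :
    (∃ r, TARSeq G k A B r) ↔ (IsIndep G A ∧ k - 1 ≤ A.card) ∧ ReflTransGen (TARMove G k) A B :=
  exists_seq_iff_reflTransGen (P := fun X => IsIndep G X ∧ k - 1 ≤ X.card) (R := TARStep)

variable {G k}

theorem TJMove.reflTransGen_tarMove (h : TJMove G S T) :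
    ReflTransGen (TARMove G S.card) S T := by
  obtain ⟨u, hu, v, hv, rfl⟩ := tjAdj_iff.1 h.1
  have hvu : v ∉ S.erase u := fun h => hv (mem_of_mem_erase h)
  have hcard : S.card - 1 ≤ (S.erase u).card := (card_erase_of_mem hu).ge
  refine ReflTransGen.head ⟨Or.inr ⟨u, hu, rfl⟩, h.2.mono (subset_insert _ _), hcard⟩ ?_
  refine ReflTransGen.single ⟨Or.inl ⟨v, hvu, rfl⟩, h.2, ?_⟩
  rw [card_insert_of_notMem hvu]
  omega

theorem reflTransGen_tarMove_of_tjMove (hAs : A.card = s) (h : ReflTransGen (TJMove G) A B) :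
    ReflTransGen (TARMove G s) A B := by
  suffices B.card = s ∧ ReflTransGen (TARMove G s) A B from this.2
  induction h with
  | refl => exact ⟨hAs, .refl⟩
  | tail _ hST ih =>
    obtain ⟨hS, hAS⟩ := ih
    exact ⟨hST.1.1 ▸ hS, hAS.trans (hS ▸ hST.reflTransGen_tarMove)⟩

variable (G s A)

def NearTJReachable (X : Finset V) : Prop :=
  ∃ T, ReflTransGen (TJMove G) A T ∧ T.card = s ∧ (T ⊆ X ∨ ∃ u ∉ X, T = insert u X)

variable {G s A}

theorem NearTJReachable.insert_vertex {v : V} (h : NearTJReachable G s A X) (hvX : v ∉ X)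
    (hY : IsIndep G (insert v X)) : NearTJReachable G s A (insert v X) := by
  obtain ⟨T, hAT, hTs, hTX | ⟨u, huX, rfl⟩⟩ := h
  · exact ⟨T, hAT, hTs, Or.inl (hTX.trans (subset_insert v X))⟩
  by_cases huv : u = v
  · exact ⟨_, hAT, hTs, Or.inl (huv ▸ subset_rfl)⟩
  have hjump := tjAdj_insert_insert huX hvX huv
  exact ⟨_, hAT.tail ⟨hjump, hY⟩, hjump.1 ▸ hTs, Or.inl subset_rfl⟩

theorem NearTJReachable.erase_vertex {w : V} (h : NearTJReachable G s A X) (hwX : w ∈ X)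
    (hY : IsIndep G (X.erase w)) (hYs : s - 1 ≤ (X.erase w).card) :
    NearTJReachable G s A (X.erase w) := by
  have hXw := card_erase_add_one hwX
  obtain ⟨T, hAT, hTs, hTX | ⟨u, huX, rfl⟩⟩ := h
  swap
  · rw [card_insert_of_notMem huX] at hTs
    omega
  by_cases hwT : w ∈ T
  swap
  · exact ⟨T, hAT, hTs, Or.inl (subset_erase.2 ⟨hTX, hwT⟩)⟩
  rcases Nat.lt_or_ge (X.erase w).card s with hsmall | hlarge
  · have hTX' : T = X := eq_of_subset_of_card_le hTX (by omega)
    exact ⟨T, hAT, hTs, Or.inr ⟨w, notMem_erase w X, by rw [insert_erase hwX, hTX']⟩⟩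
  have hTw : (T.erase w).card < (X.erase w).card := by
    rw [card_erase_of_mem hwT]
    have := card_pos.2 ⟨w, hwT⟩
    omega
  obtain ⟨x, hxX, hxT⟩ := exists_mem_notMem_of_card_lt_card hTw
  have hxT' : x ∉ T := fun h => hxT (mem_erase.2 ⟨ne_of_mem_erase hxX, h⟩)
  have hjump : TJAdj T (insert x (T.erase w)) := tjAdj_iff.2 ⟨w, hwT, x, hxT', rfl⟩
  have hsub : insert x (T.erase w) ⊆ X.erase w :=
    insert_subset hxX (erase_subset_erase w hTX)
  exact ⟨_, hAT.tail ⟨hjump, hY.mono hsub⟩, hjump.1 ▸ hTs, Or.inl hsub⟩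

theorem NearTJReachable.of_tarMove (h : NearTJReachable G s A X) (hXY : TARMove G s X Y) :
    NearTJReachable G s A Y := by
  obtain ⟨⟨v, hvX, rfl⟩ | ⟨w, hwX, rfl⟩, hY, hYs⟩ := hXY
  · exact h.insert_vertex hvX hY
  · exact h.erase_vertex hwX hY hYs

theorem nearTJReachable_of_reflTransGen (hAs : A.card = s) (h : ReflTransGen (TARMove G s) A X) :
    NearTJReachable G s A X := by
  induction h with
  | refl => exact ⟨A, .refl, hAs, Or.inl subset_rfl⟩
  | tail _ hXY ih => exact ih.of_tarMove hXY

theorem reflTransGen_tjMove_of_tarMove (hAs : A.card = s) (hBs : B.card = s)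
    (h : ReflTransGen (TARMove G s) A B) : ReflTransGen (TJMove G) A B := by
  obtain ⟨T, hAT, hTs, hTB | ⟨u, huB, rfl⟩⟩ := nearTJReachable_of_reflTransGen hAs h
  · rwa [eq_of_subset_of_card_le hTB (by omega)] at hAT
  · rw [card_insert_of_notMem huB] at hTs
    omega

end

theorem stmt8_general {V : Type*} [DecidableEq V] (G : SimpleGraph V)
    (A B : Finset V) (s : ℕ)
    (hAs : A.card = s) (hBs : B.card = s) :
    (∃ ℓ, TJSeq G A B ℓ) ↔ (∃ r, TARSeq G s A B r) := by
  rw [exists_tjSeq_iff, exists_tarSeq_iff]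
  constructor
  · rintro ⟨hA, h⟩
    exact ⟨⟨hA, by omega⟩, reflTransGen_tarMove_of_tjMove hAs h⟩
  · rintro ⟨⟨hA, -⟩, h⟩
    exact ⟨hA, reflTransGen_tjMove_of_tarMove hAs hBs h⟩

/-- two independent sets of size `s` in a finite simple graph are
TJ-reconfigurable if and only if they are TAR(s)-reconfigurable. -/
theorem stmt8 {V : Type*} [DecidableEq V] [Fintype V] (G : SimpleGraph V)
    (A B : Finset V) (s : ℕ) (hA : IsIndep G A) (hB : IsIndep G B)
    (hAs : A.card = s) (hBs : B.card = s) :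
    (∃ ℓ, TJSeq G A B ℓ) ↔ (∃ r, TARSeq G s A B r) :=
  stmt8_general G A B s hAs hBs
end

section
/- Let G be a finite simple graph and let A and B be independent sets of G with |A| = |B| = s that are TJ-reconfigurable. Then the minimum length of a TAR(s)-reconfiguration sequence from A to B equals twice the minimum length of a TJ-reconfiguration sequence from A to B, i.e., dist_TAR(A,B) = 2·dist_TJ(A,B). -/
variable {V : Type*} [DecidableEq V]

/-!
A token jump is a removal followed by an addition, so `dist_TAR ≤ 2 * dist_TJ`. Conversely,
follow a TAR(s)-sequence backwards from `B`: every member `C` of size at least `s` contains a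
size-`s` set that is `ℓ` token jumps away from `B`, where `2 * ℓ + (|C| - s)` is at most the
length of the remaining sequence. Across an addition the witness either avoids the new vertex
or trades it for a vertex of `C` outside the witness (one more jump); a removal at size
exactly `s` must be followed by an addition, and the two steps together amount to at most one
jump.
-/

section RelSeq

variable {α : Type*}

def RelSeq (P : α → Prop) (R : α → α → Prop) (a b : α) (n : ℕ) : Prop :=
  ∃ ρ : ℕ → α, ρ 0 = a ∧ ρ n = b ∧ (∀ i ≤ n, P (ρ i)) ∧ ∀ i < n, R (ρ i) (ρ (i + 1))

variable {P : α → Prop} {R : α → α → Prop}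

theorem RelSeq.zero_iff {a b : α} : RelSeq P R a b 0 ↔ a = b ∧ P a := by
  constructor
  · rintro ⟨ρ, rfl, rfl, hP, -⟩
    exact ⟨rfl, hP 0 le_rfl⟩
  · rintro ⟨rfl, ha⟩
    exact ⟨fun _ => a, rfl, rfl, fun _ _ => ha, fun i hi => absurd hi (Nat.not_lt_zero i)⟩

theorem RelSeq.succ_iff {a b : α} {n : ℕ} :
    RelSeq P R a b (n + 1) ↔ P a ∧ ∃ c, R a c ∧ RelSeq P R c b n := by
  constructor
  · rintro ⟨ρ, rfl, hb, hP, hR⟩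
    exact ⟨hP 0 (Nat.zero_le _), ρ 1, hR 0 n.succ_pos, fun i => ρ (i + 1), rfl, hb,
      fun i hi => hP (i + 1) (by omega), fun i hi => hR (i + 1) (by omega)⟩
  · rintro ⟨ha, c, hac, ρ, rfl, hb, hP, hR⟩
    refine ⟨fun | 0 => a | i + 1 => ρ i, rfl, hb, ?_, ?_⟩
    · rintro (_ | i) hi
      exacts [ha, hP i (by omega)]
    · rintro (_ | i) hi
      exacts [hac, hR i (by omega)]

theorem RelSeq.head {a b : α} {n : ℕ} (h : RelSeq P R a b n) : P a := by
  obtain ⟨ρ, rfl, -, hP, -⟩ := h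
  exact hP 0 (Nat.zero_le n)

end RelSeq

theorem IsIndep.mono_s9 {W : Type*} {G : SimpleGraph W} {A B : Finset W} (hA : IsIndep G A)
    (hBA : B ⊆ A) : IsIndep G B :=
  fun x hx y hy => hA x (hBA hx) y (hBA hy)

variable {G : SimpleGraph V} {A B C D : Finset V} {k s ℓ r : ℕ} {u v : V}

theorem TJAdj.symm (h : TJAdj A B) : TJAdj B A :=
  ⟨h.1.symm, h.2.2, h.2.1⟩

theorem tjAdj_insert_erase (hu : u ∈ C) (hv : v ∉ C) : TJAdj C (insert v (C.erase u)) := by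
  have hleft : C \ insert v (C.erase u) = {u} := by ext; simp; grind
  have hright : insert v (C.erase u) \ C = {v} := by ext; simp; grind
  refine ⟨?_, by simp [hleft], by simp [hright]⟩
  rw [Finset.card_insert_of_notMem (fun h => hv (Finset.mem_of_mem_erase h)),
    Finset.card_erase_add_one hu]

theorem TJAdj.exists_eq_insert_erase (h : TJAdj C D) :
    ∃ u ∈ C, ∃ v ∉ C, D = insert v (C.erase u) := by
  obtain ⟨u, hu⟩ := Finset.card_eq_one.mp h.2.1
  obtain ⟨v, hv⟩ := Finset.card_eq_one.mp h.2.2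
  have hu' := Finset.ext_iff.1 hu
  have hv' := Finset.ext_iff.1 hv
  simp only [Finset.mem_sdiff, Finset.mem_singleton] at hu' hv'
  refine ⟨u, ((hu' u).2 rfl).1, v, ((hv' v).2 rfl).2, ?_⟩
  ext x
  simp only [Finset.mem_insert, Finset.mem_erase]
  grind

theorem eq_or_tjAdj_insert_erase (hu : u ∈ C) (hv : v ∉ C.erase u) :
    insert v (C.erase u) = C ∨ TJAdj C (insert v (C.erase u)) := by
  by_cases hvu : v = u
  · subst hvu
    exact .inl (Finset.insert_erase hu)
  · exact .inr (tjAdj_insert_erase hu fun hvC => hv (Finset.mem_erase.2 ⟨hvu, hvC⟩))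

theorem exists_subset_eq_or_tjAdj (hD : D ⊆ insert v C) (hDC : D.card ≤ C.card) :
    ∃ D' ⊆ C, D' = D ∨ TJAdj D' D := by
  by_cases hsub : D ⊆ C
  · exact ⟨D, hsub, .inl rfl⟩
  have hvD : v ∈ D ∧ v ∉ C := by
    simp only [Finset.not_subset] at hsub
    obtain ⟨x, hxD, hxC⟩ := hsub
    grind
  have hlt : (D.erase v).card < C.card := by
    rw [Finset.card_erase_of_mem hvD.1]
    exact Nat.sub_one_lt_of_le (Finset.card_pos.2 ⟨v, hvD.1⟩) hDC
  obtain ⟨u, huC, huD⟩ := Finset.exists_mem_notMem_of_card_lt_card hlt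
  have huD' : u ∉ D := fun h => huD (Finset.mem_erase.2 ⟨by grind, h⟩)
  refine ⟨insert u (D.erase v), Finset.insert_subset huC ?_, .inr (tjAdj_insert_erase hvD.1 huD').symm⟩
  intro x hx
  have := hD (Finset.mem_of_mem_erase hx)
  grind

theorem TJSeq.zero_iff : TJSeq G A B 0 ↔ A = B ∧ IsIndep G A :=
  RelSeq.zero_iff

theorem TJSeq.succ_iff :
    TJSeq G A B (ℓ + 1) ↔ IsIndep G A ∧ ∃ C, TJAdj A C ∧ TJSeq G C B ℓ :=
  RelSeq.succ_iff

theorem tarSeq_iff_relSeq :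
    TARSeq G k A B r ↔ RelSeq (fun C => IsIndep G C ∧ k - 1 ≤ C.card) TARStep A B r :=
  Iff.rfl

theorem TARSeq.zero_iff : TARSeq G k A B 0 ↔ A = B ∧ IsIndep G A ∧ k - 1 ≤ A.card :=
  tarSeq_iff_relSeq.trans RelSeq.zero_iff

theorem TARSeq.succ_iff : TARSeq G k A B (r + 1) ↔
    (IsIndep G A ∧ k - 1 ≤ A.card) ∧ ∃ C, TARStep A C ∧ TARSeq G k C B r :=
  tarSeq_iff_relSeq.trans RelSeq.succ_iff

theorem TARSeq.card_le (h : TARSeq G k A B r) : k - 1 ≤ A.card :=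
  (RelSeq.head (tarSeq_iff_relSeq.1 h)).2

theorem TJSeq.tarSeq_two_mul (h : TJSeq G A B ℓ) (hA : A.card = s) :
    TARSeq G s A B (2 * ℓ) := by
  induction ℓ generalizing A with
  | zero =>
    obtain ⟨rfl, hAi⟩ := TJSeq.zero_iff.1 h
    exact TARSeq.zero_iff.2 ⟨rfl, hAi, by omega⟩
  | succ ℓ ih =>
    obtain ⟨hAi, C, hAC, hCB⟩ := TJSeq.succ_iff.1 h
    obtain ⟨u, hu, v, hv, rfl⟩ := hAC.exists_eq_insert_erase
    have hv' : v ∉ A.erase u := fun h => hv (Finset.mem_of_mem_erase h)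
    have hcard : (A.erase u).card + 1 = s := hA ▸ Finset.card_erase_add_one hu
    have hCs : (insert v (A.erase u)).card = s := by
      rw [Finset.card_insert_of_notMem hv', hcard]
    rw [show 2 * (ℓ + 1) = 2 * ℓ + 1 + 1 by ring]
    refine TARSeq.succ_iff.2 ⟨⟨hAi, by omega⟩, A.erase u, .inr ⟨u, hu, rfl⟩, ?_⟩
    exact TARSeq.succ_iff.2 ⟨⟨hAi.mono_s9 (A.erase_subset u), by omega⟩, _, .inl ⟨v, hv', rfl⟩,
      ih hCB hCs⟩

theorem TARSeq.exists_subset_tjSeq (hB : B.card = s) (h : TARSeq G s C B r) (hC : s ≤ C.card) :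
    ∃ D ⊆ C, D.card = s ∧ ∃ ℓ, TJSeq G D B ℓ ∧ 2 * ℓ + (C.card - s) ≤ r := by
  induction r using Nat.strong_induction_on generalizing C with
  | _ r ih =>
  rcases r with _ | r
  · obtain ⟨rfl, hCi, -⟩ := TARSeq.zero_iff.1 h
    exact ⟨C, subset_rfl, hB, 0, TJSeq.zero_iff.2 ⟨rfl, hCi⟩, by omega⟩
  obtain ⟨⟨hCi, -⟩, C', hstep, hC'B⟩ := TARSeq.succ_iff.1 h
  rcases hstep with ⟨v, hv, rfl⟩ | ⟨u, hu, rfl⟩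
  · have hcard : (insert v C).card = C.card + 1 := Finset.card_insert_of_notMem hv
    obtain ⟨D, hD, hDs, ℓ, hDB, hℓ⟩ := ih r (by omega) hC'B (by omega)
    obtain ⟨D', hD'C, rfl | hD'D⟩ := exists_subset_eq_or_tjAdj hD (by omega)
    · exact ⟨D', hD'C, hDs, ℓ, hDB, by omega⟩
    · exact ⟨D', hD'C, hD'D.1.trans hDs, ℓ + 1,
        TJSeq.succ_iff.2 ⟨hCi.mono_s9 hD'C, D, hD'D, hDB⟩, by omega⟩
  have hcard : (C.erase u).card + 1 = C.card := Finset.card_erase_add_one hu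
  by_cases hCs : s < C.card
  · obtain ⟨D, hD, hDs, ℓ, hDB, hℓ⟩ := ih r (by omega) hC'B (by omega)
    exact ⟨D, hD.trans (C.erase_subset u), hDs, ℓ, hDB, by omega⟩
  rcases r with _ | r
  · obtain ⟨rfl, -⟩ := TARSeq.zero_iff.1 hC'B
    omega
  obtain ⟨-, E, hstep, hEB⟩ := TARSeq.succ_iff.1 hC'B
  rcases hstep with ⟨v, hv, rfl⟩ | ⟨w, hw, rfl⟩
  · have hEs : (insert v (C.erase u)).card = s := by
      rw [Finset.card_insert_of_notMem hv]
      omega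
    obtain ⟨D, hD, hDs, ℓ, hDB, hℓ⟩ := ih r (by omega) hEB (by omega)
    obtain rfl := Finset.eq_of_subset_of_card_le hD (by omega)
    rcases eq_or_tjAdj_insert_erase hu hv with hE | hE
    · exact ⟨C, subset_rfl, by omega, ℓ, hE ▸ hDB, by omega⟩
    · exact ⟨C, subset_rfl, by omega, ℓ + 1, TJSeq.succ_iff.2 ⟨hCi, _, hE, hDB⟩, by omega⟩
  · have := hEB.card_le
    have := Finset.card_erase_add_one hw
    omega

theorem TARSeq.exists_tjSeq (hA : A.card = s) (hB : B.card = s) (h : TARSeq G s A B r) :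
    ∃ ℓ, TJSeq G A B ℓ ∧ 2 * ℓ ≤ r := by
  obtain ⟨D, hDA, hDs, ℓ, hDB, hℓ⟩ := h.exists_subset_tjSeq hB hA.ge
  obtain rfl := Finset.eq_of_subset_of_card_le hDA (by omega)
  exact ⟨ℓ, hDB, by omega⟩

theorem Nat.sInf_eq_of_monotone {p q : Set ℕ} {f : ℕ → ℕ} (hf : Monotone f) (hq : q.Nonempty)
    (hqp : ∀ n ∈ q, f n ∈ p) (hpq : ∀ m ∈ p, ∃ n ∈ q, f n ≤ m) : sInf p = f (sInf q) := by
  have hp : f (sInf q) ∈ p := hqp _ (Nat.sInf_mem hq)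
  obtain ⟨n, hn, hnp⟩ := hpq _ (Nat.sInf_mem ⟨_, hp⟩)
  exact le_antisymm (Nat.sInf_le hp) ((hf (Nat.sInf_le hn)).trans hnp)

theorem stmt9_general {V : Type*} [DecidableEq V] (G : SimpleGraph V)
    (A B : Finset V) (s : ℕ)
    (hAs : A.card = s) (hBs : B.card = s)
    (hreconf : ∃ ℓ, TJSeq G A B ℓ) :
    sInf {r | TARSeq G s A B r} = 2 * sInf {ℓ | TJSeq G A B ℓ} :=
  Nat.sInf_eq_of_monotone (fun _ _ h => Nat.mul_le_mul_left 2 h) hreconf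
    (fun _ h => h.tarSeq_two_mul hAs) (fun _ h => h.exists_tjSeq hAs hBs)

/-- for TJ-reconfigurable independent sets `A`, `B` of size `s`, the minimum
length of a TAR(s)-reconfiguration sequence from `A` to `B` is exactly twice the minimum
length of a TJ-reconfiguration sequence from `A` to `B`. -/
theorem stmt9 {V : Type*} [DecidableEq V] [Fintype V] (G : SimpleGraph V)
    (A B : Finset V) (s : ℕ) (hA : IsIndep G A) (hB : IsIndep G B)
    (hAs : A.card = s) (hBs : B.card = s)
    (hreconf : ∃ ℓ, TJSeq G A B ℓ) :
    sInf {r | TARSeq G s A B r} = 2 * sInf {ℓ | TJSeq G A B ℓ} :=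
  stmt9_general G A B s hAs hBs hreconf
end

section
/- Let G be a finite simple graph with two vertices s and t at distance k, and let G' be the associated graph on the vertices of shortest (s,t)-paths. Then a set S of vertices of G' is an independent set of G' of size k+1 if and only if S is the vertex set of a shortest (s,t)-path of G; moreover, distinct shortest (s,t)-paths of G have distinct vertex sets, so this correspondence is a bijection between shortest (s,t)-paths in G and independent sets of size k+1 in G'. -/
/-! The `i`-th vertex of a shortest `(s,t)`-path lies at distance exactly `i` from `s`, so a
shortest path has one vertex in each layer `D_i` and its vertices in consecutive layers are
adjacent in `G`; hence no edge of `G'` joins two of them. Conversely, an independent set of `G'`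
meets each layer at most once, so if it has `k + 1` elements it picks one vertex from each of
`D_0 = {s}, …, D_k = {t}`, and independence forces consecutive picks to be adjacent in `G`.
Since the layer of a path vertex is its position, the vertex set determines the path. -/

/-- The set of vertices of `G` lying on shortest `(s,t)`-paths: those `v` with
`dist(s,v) = i` and `dist(v,t) = k - i` for some `i`, i.e. with
`dist(s,v) + dist(v,t) = k` (reachability is required so that the distances are
meaningful). -/
def OnSP {V : Type*} (G : SimpleGraph V) (s t : V) (k : ℕ) : Set V :=
  {v | G.Reachable s v ∧ G.Reachable v t ∧ G.dist s v + G.dist v t = k}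

/-- For `0 ≤ i ≤ k`, `D_i` is the set of vertices `v` with `dist(s,v) = i` and
`dist(v,t) = k - i`; a vertex of `OnSP G s t k` lies in `D_i` exactly when
`dist(s,v) = i`.  The graph `G'` on `OnSP G s t k`: two distinct vertices are adjacent
iff they lie in the same layer `D_i`, or they lie in consecutive layers `D_i`, `D_{i+1}`
and are non-adjacent in `G`. -/
def Gprime {V : Type*} (G : SimpleGraph V) (s t : V) (k : ℕ) :
    SimpleGraph (OnSP G s t k) :=
  SimpleGraph.fromRel (fun u v =>
    G.dist s u.val = G.dist s v.val ∨
      (G.dist s u.val + 1 = G.dist s v.val ∧ ¬G.Adj u.val v.val))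

/-- `p` is a shortest `(s,t)`-path in `H`, recorded as the sequence of its `L+1` vertices;
its length `L` is required to equal the distance between `s` and `t`. -/
def IsShortestSTPath {V : Type*} (H : SimpleGraph V) (s t : V) (L : ℕ)
    (p : Fin (L + 1) → V) : Prop :=
  p 0 = s ∧ p (Fin.last L) = t ∧ (∀ i : Fin L, H.Adj (p i.castSucc) (p i.succ)) ∧
    L = H.dist s t

/-- `A` is an independent set (of vertices) of the graph `H`. -/
def IsIndepSet {W : Type*} (H : SimpleGraph W) (A : Set W) : Prop :=
  ∀ u ∈ A, ∀ v ∈ A, ¬H.Adj u v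

namespace SimpleGraph

variable {V : Type*} {G : SimpleGraph V} {L : ℕ} {p : Fin (L + 1) → V}

lemma reachable_and_dist_from_zero_le (hadj : ∀ i : Fin L, G.Adj (p i.castSucc) (p i.succ))
    (i : Fin (L + 1)) : G.Reachable (p 0) (p i) ∧ G.dist (p 0) (p i) ≤ i := by
  induction i using Fin.induction with
  | zero => simp
  | succ i ih =>
    have hstep := (hadj i).reachable.dist_triangle_right (p 0)
    rw [dist_eq_one_iff_adj.mpr (hadj i)] at hstep
    exact ⟨ih.1.trans (hadj i).reachable, by grind [Fin.val_castSucc]⟩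

lemma dist_to_last_le (hadj : ∀ i : Fin L, G.Adj (p i.castSucc) (p i.succ))
    (i : Fin (L + 1)) : G.dist (p i) (p (Fin.last L)) ≤ L - i := by
  induction i using Fin.reverseInduction with
  | last => simp
  | cast i ih =>
    have hstep := (hadj i).reachable.dist_triangle_left (p (Fin.last L))
    rw [dist_eq_one_iff_adj.mpr (hadj i)] at hstep
    grind [Fin.val_castSucc]

end SimpleGraph

namespace IsShortestSTPath

variable {V : Type*} {G : SimpleGraph V} {s t : V} {k : ℕ} {p : Fin (k + 1) → V}

lemma dist_eq (hp : IsShortestSTPath G s t k p) (i : Fin (k + 1)) : G.dist s (p i) = i := by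
  obtain ⟨h0, hlast, hadj, hk⟩ := hp
  obtain ⟨hsi, hle⟩ := SimpleGraph.reachable_and_dist_from_zero_le hadj i
  have hle' := SimpleGraph.dist_to_last_le hadj i
  rw [h0] at hsi hle
  rw [hlast] at hle'
  have htri := hsi.dist_triangle_left t
  omega

lemma injective (hp : IsShortestSTPath G s t k p) : Function.Injective p :=
  fun i j hij => Fin.ext (by rw [← hp.dist_eq i, ← hp.dist_eq j, hij])

lemma adj_of_val_add_one_eq (hp : IsShortestSTPath G s t k p) {i j : Fin (k + 1)}
    (h : i.val + 1 = j) : G.Adj (p i) (p j) := by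
  have hi : i.val < k := by omega
  simpa [Fin.ext_iff, h] using hp.2.2.1 ⟨i, hi⟩

end IsShortestSTPath

section Gprime

variable {V : Type*} {G : SimpleGraph V} {s t : V} {k : ℕ}

/-- The index `i` of the layer `D_i` containing `u`. -/
noncomputable def OnSP.layer (u : OnSP G s t k) : Fin (k + 1) :=
  ⟨G.dist s u, by have := u.2.2.2; omega⟩

lemma OnSP.layer_injOn_of_isIndepSet {S : Set (OnSP G s t k)}
    (hS : IsIndepSet (Gprime G s t k) S) : Set.InjOn OnSP.layer S := by
  intro u hu v hv huv
  by_contra hne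
  exact hS u hu v hv
    ((SimpleGraph.fromRel_adj _ _ _).mpr ⟨hne, Or.inl (Or.inl (congrArg Fin.val huv))⟩)

lemma OnSP.adj_of_isIndepSet {S : Set (OnSP G s t k)} (hS : IsIndepSet (Gprime G s t k) S)
    {u v : OnSP G s t k} (hu : u ∈ S) (hv : v ∈ S) (huv : (layer u).val + 1 = layer v) :
    G.Adj u v := by
  by_contra hn
  have hne : u ≠ v := by rintro rfl; omega
  exact hS u hu v hv ((SimpleGraph.fromRel_adj _ _ _).mpr ⟨hne, Or.inl (Or.inr ⟨huv, hn⟩)⟩)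

lemma IsShortestSTPath.isIndepSet_gprime {p : Fin (k + 1) → V} (hp : IsShortestSTPath G s t k p)
    {S : Set (OnSP G s t k)} (hS : Subtype.val '' S = Set.range p) :
    IsIndepSet (Gprime G s t k) S := by
  intro u hu v hv hadj
  obtain ⟨i, hi⟩ : u.val ∈ Set.range p := hS ▸ ⟨u, hu, rfl⟩
  obtain ⟨j, hj⟩ : v.val ∈ Set.range p := hS ▸ ⟨v, hv, rfl⟩
  obtain ⟨hne, hrel⟩ := (SimpleGraph.fromRel_adj _ _ _).mp hadj
  have hij : i ≠ j := by
    rintro rfl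
    exact hne (Subtype.ext (hi.symm.trans hj))
  rw [← hi, ← hj, hp.dist_eq, hp.dist_eq] at hrel
  rcases hrel with (h | ⟨h, hn⟩) | (h | ⟨h, hn⟩)
  · exact hij (Fin.ext h)
  · exact hn (hp.adj_of_val_add_one_eq h)
  · exact hij (Fin.ext h.symm)
  · exact hn (hp.adj_of_val_add_one_eq h)

lemma IsShortestSTPath.ncard_eq {p : Fin (k + 1) → V} (hp : IsShortestSTPath G s t k p)
    {S : Set (OnSP G s t k)} (hS : Subtype.val '' S = Set.range p) : S.ncard = k + 1 := by
  rw [← Set.ncard_image_of_injective S Subtype.val_injective, hS, ← Set.image_univ,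
    Set.ncard_image_of_injective _ hp.injective, Set.ncard_univ, Nat.card_fin]

theorem exists_isShortestSTPath_of_isIndepSet (hd : G.dist s t = k) {S : Set (OnSP G s t k)}
    (hS : IsIndepSet (Gprime G s t k) S) (hcard : S.ncard = k + 1) :
    ∃ p : Fin (k + 1) → V, IsShortestSTPath G s t k p ∧ Subtype.val '' S = Set.range p := by
  let f : S → Fin (k + 1) := fun u => OnSP.layer u.1
  have hf : Function.Bijective f := by
    refine (Nat.bijective_iff_injective_and_card f).mpr ⟨?_, ?_⟩
    · exact fun u v huv => Subtype.ext (OnSP.layer_injOn_of_isIndepSet hS u.2 v.2 huv)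
    · rw [Nat.card_coe_set_eq, hcard, Nat.card_fin]
  let e := Equiv.ofBijective f hf
  let p : Fin (k + 1) → V := fun i => (e.symm i).1.1
  have hlayer (i : Fin (k + 1)) : OnSP.layer (e.symm i).1 = i := e.apply_symm_apply i
  have hdist (i : Fin (k + 1)) : G.dist s (p i) = i := congrArg Fin.val (hlayer i)
  refine ⟨p, ⟨?_, ?_, fun i => ?_, hd.symm⟩, ?_⟩
  · exact ((e.symm 0).1.2.1.dist_eq_zero_iff.mp (hdist 0)).symm
  · have hsum := (e.symm (Fin.last k)).1.2.2.2
    have hlast : G.dist s (e.symm (Fin.last k)).1.1 = k := hdist (Fin.last k)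
    exact (e.symm (Fin.last k)).1.2.2.1.dist_eq_zero_iff.mp (by omega)
  · exact OnSP.adj_of_isIndepSet hS (e.symm _).2 (e.symm _).2 (by simp [hlayer])
  · rw [Set.image_eq_range, ← e.symm.surjective.range_comp]
    rfl

end Gprime

lemma IsShortestSTPath.eq_of_range_eq {V : Type*} {G : SimpleGraph V} {s t : V} {k : ℕ}
    {p q : Fin (k + 1) → V} (hp : IsShortestSTPath G s t k p) (hq : IsShortestSTPath G s t k q)
    (hpq : Set.range p = Set.range q) : p = q := by
  funext i
  obtain ⟨j, hj⟩ : q i ∈ Set.range p := hpq ▸ Set.mem_range_self i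
  have hji : j = i := Fin.ext (by rw [← hp.dist_eq j, ← hq.dist_eq i, hj])
  subst hji
  exact hj

theorem stmt11_general {V : Type*} (G : SimpleGraph V) (s t : V) (k : ℕ)
    (hd : G.dist s t = k) :
    (∀ S : Set (OnSP G s t k),
      (IsIndepSet (Gprime G s t k) S ∧ S.ncard = k + 1) ↔
        ∃ p : Fin (k + 1) → V, IsShortestSTPath G s t k p ∧
          Subtype.val '' S = Set.range p) ∧
    (∀ p q : Fin (k + 1) → V, IsShortestSTPath G s t k p → IsShortestSTPath G s t k q →
      Set.range p = Set.range q → p = q) := by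
  refine ⟨fun S => ⟨fun ⟨hS, hcard⟩ => exists_isShortestSTPath_of_isIndepSet hd hS hcard, ?_⟩,
    fun p q hp hq => hp.eq_of_range_eq hq⟩
  rintro ⟨p, hp, hS⟩
  exact ⟨hp.isIndepSet_gprime hS, hp.ncard_eq hS⟩

/-- a set `S` of vertices of `G'` is an independent set of `G'` of size
`k+1` iff `S` is the vertex set of a shortest `(s,t)`-path of `G`; moreover distinct
shortest `(s,t)`-paths have distinct vertex sets, so this correspondence is a bijection. -/
theorem stmt11 {V : Type*} [Fintype V] (G : SimpleGraph V) (s t : V) (k : ℕ)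
    (hr : G.Reachable s t) (hd : G.dist s t = k) :
    (∀ S : Set (OnSP G s t k),
      (IsIndepSet (Gprime G s t k) S ∧ S.ncard = k + 1) ↔
        ∃ p : Fin (k + 1) → V, IsShortestSTPath G s t k p ∧
          Subtype.val '' S = Set.range p) ∧
    (∀ p q : Fin (k + 1) → V, IsShortestSTPath G s t k p → IsShortestSTPath G s t k q →
      Set.range p = Set.range q → p = q) :=
  stmt11_general G s t k hd
end

section
/- Let G be a finite simple graph with two vertices s and t at distance k, and let G' be the associated graph on the vertices of shortest (s,t)-paths. Two shortest (s,t)-paths p and q of G differ, as sequences, in exactly one position if and only if their vertex sets S_p and S_q satisfy |S_p \ S_q| = |S_q \ S_p| = 1 with the two differing vertices adjacent in G'; in particular, p and q are adjacent in the shortest-path reconfiguration graph of G if and only if S_p and S_q are TS-adjacent (equivalently, TJ-adjacent) independent sets of G'. -/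
/-- Two vertex sequences differ in exactly one position. -/
def DiffOne {N : ℕ} {α : Type*} (p q : Fin N → α) : Prop :=
  ∃ i, p i ≠ q i ∧ ∀ j, j ≠ i → p j = q j

/-- Two sets are TS-adjacent in `H` (differ by one token slide). -/
def TSAdj {W : Type*} (H : SimpleGraph W) (A B : Set W) : Prop :=
  ∃ u ∈ A, ∃ v, v ∉ A ∧ H.Adj u v ∧ B = insert v (A \ {u})

/-- Two sets are TJ-adjacent (differ by one token jump). -/
def TJAdjSet {W : Type*} (A B : Set W) : Prop :=
  A.ncard = B.ncard ∧ (A \ B).ncard = 1 ∧ (B \ A).ncard = 1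

lemma dist_triangle' {V : Type*} {G : SimpleGraph V} {s v t : V}
    (h1 : G.Reachable s v) (h2 : G.Reachable v t) :
    G.dist s t ≤ G.dist s v + G.dist v t := by
  obtain ⟨w1, hw1⟩ := h1.exists_walk_length_eq_dist
  obtain ⟨w2, hw2⟩ := h2.exists_walk_length_eq_dist
  calc G.dist s t ≤ (w1.append w2).length := SimpleGraph.dist_le _
    _ = _ := by rw [SimpleGraph.Walk.length_append, hw1, hw2]

lemma sp_dist {V : Type*} {G : SimpleGraph V} {s t : V} {k : ℕ}
    {p : Fin (k + 1) → V} (hp : IsShortestSTPath G s t k p) (i : Fin (k + 1)) :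
    G.Reachable s (p i) ∧ G.Reachable (p i) t ∧
      G.dist s (p i) = i.val ∧ G.dist (p i) t = k - i.val := by
  obtain ⟨h0, hlast, hadj, hL⟩ := hp
  have up : ∀ i : Fin (k + 1), G.Reachable s (p i) ∧ G.dist s (p i) ≤ i.val := by
    intro i
    induction i using Fin.induction with
    | zero => exact ⟨by rw [h0], by simp [h0]⟩
    | succ j ih =>
      refine ⟨ih.1.trans (hadj j).reachable, ?_⟩
      obtain ⟨w, hw⟩ := ih.1.exists_walk_length_eq_dist
      calc G.dist s (p j.succ) ≤ (w.concat (hadj j)).length := SimpleGraph.dist_le _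
        _ = G.dist s (p j.castSucc) + 1 := by rw [SimpleGraph.Walk.length_concat, hw]
        _ ≤ j.val + 1 := by
            have h2 := ih.2
            simp only [Fin.coe_castSucc] at h2
            omega
        _ = (j.succ).val := by simp
  have down : ∀ i : Fin (k + 1), G.Reachable (p i) t ∧ G.dist (p i) t ≤ k - i.val := by
    intro i
    induction i using Fin.reverseInduction with
    | last => exact ⟨by rw [hlast], by simp [hlast]⟩
    | cast j ih =>
      refine ⟨(hadj j).reachable.trans ih.1, ?_⟩
      obtain ⟨w, hw⟩ := ih.1.exists_walk_length_eq_dist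
      have hj := j.isLt
      calc G.dist (p j.castSucc) t ≤ ((hadj j).toWalk.append w).length := SimpleGraph.dist_le _
        _ = 1 + G.dist (p j.succ) t := by
            rw [SimpleGraph.Walk.length_append, hw]; simp
        _ ≤ k - j.val := by
            have := ih.2
            simp only [Fin.val_succ] at this
            omega
  have h1 := up i
  have h2 := down i
  have htri : G.dist s t ≤ G.dist s (p i) + G.dist (p i) t := dist_triangle' h1.1 h2.1
  have hik : i.val ≤ k := by omega
  refine ⟨h1.1, h2.1, ?_, ?_⟩ <;> omega

lemma sp_mem {V : Type*} {G : SimpleGraph V} {s t : V} {k : ℕ}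
    {p : Fin (k + 1) → V} (hp : IsShortestSTPath G s t k p) (i : Fin (k + 1)) :
    p i ∈ OnSP G s t k := by
  obtain ⟨r1, r2, d1, d2⟩ := sp_dist hp i
  have := i.isLt
  exact ⟨r1, r2, by omega⟩

lemma sp_cross {V : Type*} {G : SimpleGraph V} {s t : V} {k : ℕ}
    {p q : Fin (k + 1) → V} (hp : IsShortestSTPath G s t k p)
    (hq : IsShortestSTPath G s t k q) {m l : Fin (k + 1)} (h : p m = q l) : m = l := by
  have h1 := (sp_dist hp m).2.2.1
  have h2 := (sp_dist hq l).2.2.1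
  rw [h, h2] at h1
  exact Fin.ext h1.symm

lemma sp_rev {V : Type*} {G : SimpleGraph V} {s t : V} {k : ℕ}
    {p q : Fin (k + 1) → V} (hp : IsShortestSTPath G s t k p)
    (hq : IsShortestSTPath G s t k q) (i : Fin (k + 1))
    (h1 : p i ∉ Set.range q) (h2 : ∀ m, m ≠ i → p m ∈ Set.range q) :
    DiffOne p q := by
  refine ⟨i, fun h => h1 ⟨i, h.symm⟩, fun j hj => ?_⟩
  obtain ⟨l, hl⟩ := h2 j hj
  have := sp_cross hp hq hl.symm
  rw [← hl, this]

/-- shortest `(s,t)`-paths `p` and `q` of `G` differ in exactly one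
position iff their vertex sets differ in exactly one element on each side with the two
differing vertices adjacent in `G'`; in particular, `p` and `q` are adjacent in the
shortest-path reconfiguration graph of `G` iff their vertex sets (viewed in `G'`) are
TS-adjacent, equivalently TJ-adjacent. -/
theorem stmt12 {V : Type*} [Fintype V] (G : SimpleGraph V) (s t : V) (k : ℕ)
    (hr : G.Reachable s t) (hd : G.dist s t = k)
    (p q : Fin (k + 1) → V)
    (hp : IsShortestSTPath G s t k p) (hq : IsShortestSTPath G s t k q) :
    (DiffOne p q ↔
      ∃ u v : OnSP G s t k,
        Set.range p \ Set.range q = {u.val} ∧ Set.range q \ Set.range p = {v.val} ∧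
        (Gprime G s t k).Adj u v) ∧
    (DiffOne p q ↔
      TSAdj (Gprime G s t k)
        {w : OnSP G s t k | w.val ∈ Set.range p} {w : OnSP G s t k | w.val ∈ Set.range q}) ∧
    (DiffOne p q ↔
      TJAdjSet
        {w : OnSP G s t k | w.val ∈ Set.range p} {w : OnSP G s t k | w.val ∈ Set.range q}) := by
  have hinjp : Function.Injective p := fun a b h => sp_cross hp hp h
  have hinjq : Function.Injective q := fun a b h => sp_cross hq hq h
  -- facts from DiffOne
  have facts : ∀ i : Fin (k + 1), p i ≠ q i → (∀ j, j ≠ i → p j = q j) →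
      p i ∉ Set.range q ∧ q i ∉ Set.range p ∧
      Set.range p \ Set.range q = {p i} ∧ Set.range q \ Set.range p = {q i} := by
    intro i hne hrest
    have hpnq : p i ∉ Set.range q := by
      rintro ⟨l, hl⟩
      rcases eq_or_ne l i with rfl | hli
      · exact hne hl.symm
      · exact hli (hinjp ((hrest l hli).trans hl))
    have hqnp : q i ∉ Set.range p := by
      rintro ⟨l, hl⟩
      rcases eq_or_ne l i with rfl | hli
      · exact hne hl
      · exact hli (hinjq ((hrest l hli).symm.trans hl))
    refine ⟨hpnq, hqnp, ?_, ?_⟩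
    · ext x
      simp only [Set.mem_diff, Set.mem_singleton_iff]
      constructor
      · rintro ⟨⟨m, rfl⟩, hx⟩
        rcases eq_or_ne m i with rfl | hmi
        · rfl
        · exact absurd ⟨m, (hrest m hmi).symm⟩ hx
      · rintro rfl
        exact ⟨⟨i, rfl⟩, hpnq⟩
    · ext x
      simp only [Set.mem_diff, Set.mem_singleton_iff]
      constructor
      · rintro ⟨⟨m, rfl⟩, hx⟩
        rcases eq_or_ne m i with rfl | hmi
        · rfl
        · exact absurd ⟨m, hrest m hmi⟩ hx
      · rintro rfl
        exact ⟨⟨i, rfl⟩, hqnp⟩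
  refine ⟨⟨?_, ?_⟩, ⟨?_, ?_⟩, ⟨?_, ?_⟩⟩
  -- 1 →
  · rintro ⟨i, hne, hrest⟩
    obtain ⟨hpnq, hqnp, hs1, hs2⟩ := facts i hne hrest
    refine ⟨⟨p i, sp_mem hp i⟩, ⟨q i, sp_mem hq i⟩, hs1, hs2, ?_⟩
    rw [Gprime, SimpleGraph.fromRel_adj]
    refine ⟨fun h => hne (congrArg Subtype.val h), Or.inl (Or.inl ?_)⟩
    rw [(sp_dist hp i).2.2.1, (sp_dist hq i).2.2.1]
  -- 1 ←
  · rintro ⟨u, v, hs1, hs2, _⟩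
    have hu : u.val ∈ Set.range p \ Set.range q := hs1 ▸ rfl
    obtain ⟨⟨i, hi⟩, hnq⟩ := hu
    refine sp_rev hp hq i (hi ▸ hnq) fun m hm => ?_
    by_contra hc
    have : p m ∈ Set.range p \ Set.range q := ⟨⟨m, rfl⟩, hc⟩
    rw [hs1, Set.mem_singleton_iff, ← hi] at this
    exact hm (hinjp this)
  -- 2 →
  · rintro ⟨i, hne, hrest⟩
    obtain ⟨hpnq, hqnp, hs1, hs2⟩ := facts i hne hrest
    refine ⟨⟨p i, sp_mem hp i⟩, ⟨i, rfl⟩, ⟨q i, sp_mem hq i⟩, hqnp, ?_, ?_⟩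
    · rw [Gprime, SimpleGraph.fromRel_adj]
      refine ⟨fun h => hne (congrArg Subtype.val h), Or.inl (Or.inl ?_)⟩
      rw [(sp_dist hp i).2.2.1, (sp_dist hq i).2.2.1]
    · ext w
      simp only [Set.mem_setOf_eq, Set.mem_insert_iff, Set.mem_diff, Set.mem_singleton_iff]
      constructor
      · rintro ⟨l, hl⟩
        rcases eq_or_ne l i with rfl | hli
        · exact Or.inl (Subtype.ext hl.symm)
        · refine Or.inr ⟨⟨l, (hrest l hli ▸ hl : p l = w.val)⟩, fun hwu => ?_⟩
          have : q l = p i := by rw [hl]; exact congrArg Subtype.val hwu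
          rw [← hrest l hli] at this
          exact hli (hinjp this)
      · rintro (rfl | ⟨⟨m, hm⟩, hwu⟩)
        · exact ⟨i, rfl⟩
        · have hmi : m ≠ i := by
            rintro rfl
            exact hwu (Subtype.ext hm.symm)
          exact ⟨m, by rw [← hrest m hmi, hm]⟩
  -- 2 ←
  · rintro ⟨u, hu, v, hv, _, hB⟩
    simp only [Set.mem_setOf_eq] at hu
    obtain ⟨i, hi⟩ := hu
    have hunq : u.val ∉ Set.range q := by
      intro hc
      have : u ∈ {w : OnSP G s t k | w.val ∈ Set.range q} := hc
      rw [hB] at this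
      rcases this with h | h
      · exact hv (h ▸ (hi ▸ ⟨i, rfl⟩ : u.val ∈ Set.range p))
      · exact h.2 rfl
    refine sp_rev hp hq i (hi ▸ hunq) fun m hm => ?_
    have hmem : (⟨p m, sp_mem hp m⟩ : OnSP G s t k) ∈
        {w : OnSP G s t k | w.val ∈ Set.range q} := by
      rw [hB]
      refine Or.inr ⟨⟨m, rfl⟩, fun hc => ?_⟩
      have : p m = u.val := congrArg Subtype.val hc
      rw [← hi] at this
      exact hm (hinjp this)
    exact hmem
  -- 3 →
  · rintro ⟨i, hne, hrest⟩
    obtain ⟨hpnq, hqnp, hs1, hs2⟩ := facts i hne hrest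
    set A := {w : OnSP G s t k | w.val ∈ Set.range p}
    set B := {w : OnSP G s t k | w.val ∈ Set.range q}
    have hAB : A \ B = {⟨p i, sp_mem hp i⟩} := by
      ext w
      simp only [A, B, Set.mem_diff, Set.mem_setOf_eq, Set.mem_singleton_iff]
      rw [← Subtype.coe_injective.eq_iff]
      constructor
      · intro h
        have : w.val ∈ Set.range p \ Set.range q := h
        rwa [hs1, Set.mem_singleton_iff] at this
      · intro h
        exact ⟨h ▸ ⟨i, rfl⟩, h ▸ hpnq⟩
    have hBA : B \ A = {⟨q i, sp_mem hq i⟩} := by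
      ext w
      simp only [A, B, Set.mem_diff, Set.mem_setOf_eq, Set.mem_singleton_iff]
      rw [← Subtype.coe_injective.eq_iff]
      constructor
      · intro h
        have : w.val ∈ Set.range q \ Set.range p := h
        rwa [hs2, Set.mem_singleton_iff] at this
      · intro h
        exact ⟨h ▸ ⟨i, rfl⟩, h ▸ hqnp⟩
    refine ⟨?_, by rw [hAB]; exact Set.ncard_singleton _, by rw [hBA]; exact Set.ncard_singleton _⟩
    have h1 := Set.ncard_inter_add_ncard_diff_eq_ncard A B (Set.toFinite A)
    have h2 := Set.ncard_inter_add_ncard_diff_eq_ncard B A (Set.toFinite B)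
    rw [hAB] at h1
    rw [hBA] at h2
    rw [Set.inter_comm] at h2
    simp [Set.ncard_singleton] at h1 h2
    omega
  -- 3 ←
  · rintro ⟨_, h1, _⟩
    obtain ⟨u, hu⟩ := Set.ncard_eq_one.mp h1
    have humem : u ∈ {w : OnSP G s t k | w.val ∈ Set.range p} \
        {w : OnSP G s t k | w.val ∈ Set.range q} := hu ▸ rfl
    obtain ⟨⟨i, hi⟩, hunq⟩ := humem
    refine sp_rev hp hq i (hi ▸ hunq) fun m hm => ?_
    by_contra hc
    have : (⟨p m, sp_mem hp m⟩ : OnSP G s t k) ∈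
        {w : OnSP G s t k | w.val ∈ Set.range p} \
        {w : OnSP G s t k | w.val ∈ Set.range q} := ⟨⟨m, rfl⟩, hc⟩
    rw [hu, Set.mem_singleton_iff] at this
    have : p m = u.val := congrArg Subtype.val this
    rw [← hi] at this
    exact hm (hinjp this)
end

section
/- Let G be a finite simple graph with two vertices s and t at distance k, and let G' be the associated graph on the vertices of shortest (s,t)-paths. Then G' contains no induced cycle of odd length at least 5, and no induced subgraph isomorphic to the complement of a cycle of odd length at least 5. -/
/-!
The distance from `s` layers `G'`: every layer is a clique and edges join only equal or
consecutive layers, and such a layering pulls back along induced embeddings. Along an induced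
cycle of length at least 5, vertices two or three steps apart are non-adjacent, hence in different
layers; this forces the layer to move in one direction along every second vertex, which cannot
close up. Along the complement of a cycle, consecutive vertices lie in different layers while
vertices two steps apart are at most one layer apart, so the layer alternately rises and falls,
which is impossible around an odd cycle.
-/

namespace Function.Periodic

theorem not_forall_lt_add {α : Type*} [Preorder α] {X : ℕ → α} {n d : ℕ}
    (hX : Periodic X n) (hn : 0 < n) : ¬ ∀ a, X a < X (a + d) := by
  intro h
  have hmono : StrictMono fun j => X (j * d) := strictMono_nat_of_lt_succ fun j => by
    simpa only [Nat.succ_mul] using h (j * d)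
  have hlt : X (0 * d) < X (n * d) := hmono hn
  rw [zero_mul, show X (n * d) = X 0 by simpa [mul_comm] using hX.nat_mul d 0] at hlt
  exact hlt.false

variable {X : ℕ → ℤ} {n : ℕ}

theorem exists_eq_add_two_or_eq_add_three (hX : Periodic X n) (hn : 0 < n)
    (hstep : ∀ a, |X (a + 1) - X a| ≤ 1) : ∃ a, X (a + 2) = X a ∨ X (a + 3) = X a := by
  by_contra! H
  have hsign : ∀ a, X a < X (a + 2) ↔ X (a + 1) < X (a + 3) := fun a => by
    have h01 := abs_le.1 (hstep a)
    have h23 : |X (a + 3) - X (a + 2)| ≤ 1 := hstep (a + 2)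
    have h13 : X (a + 3) ≠ X (a + 1) := (H (a + 1)).1
    have := H a
    rw [abs_le] at h23
    omega
  have hconst : ∀ a, X a < X (a + 2) ↔ X 0 < X 2 := fun a => by
    induction a with
    | zero => rfl
    | succ a ih => exact (hsign a).symm.trans ih
  by_cases h0 : X 0 < X 2
  · exact hX.not_forall_lt_add hn fun a => (hconst a).2 h0
  · refine (hX.comp OrderDual.toDual).not_forall_lt_add hn (d := 2) fun a => ?_
    have := hconst a; have := (H a).1
    simp only [comp_apply, OrderDual.toDual_lt_toDual]
    omega

theorem exists_one_lt_abs_sub_add_two (hX : Periodic X n) (hn : Odd n)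
    (hstep : ∀ a, X (a + 1) ≠ X a) : ∃ a, 1 < |X (a + 2) - X a| := by
  by_contra! H
  have hflip : ∀ a, X (a + 1) < X (a + 2) ↔ ¬ X a < X (a + 1) := fun a => by
    have h12 : X (a + 2) ≠ X (a + 1) := hstep (a + 1)
    have := hstep a; have := abs_le.1 (H a)
    omega
  have hparity : ∀ a, X a < X (a + 1) ↔ (Even a ↔ X 0 < X 1) := fun a => by
    induction a with
    | zero => simp
    | succ a ih => rw [hflip, ih, Nat.even_add_one]; tauto
  have := hparity n
  rw [show X n = X 0 by simpa using hX 0, show X (n + 1) = X 1 by simpa [add_comm] using hX 1]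
    at this
  simp only [Nat.not_even_iff_odd.mpr hn, false_iff, not_lt] at this
  have := hstep 0
  omega

end Function.Periodic

open Fin.NatCast Fin.CommRing

namespace Fin

theorem natCast_add_sub_natCast {n : ℕ} [NeZero n] (a d : ℕ) :
    ((a + d : ℕ) : Fin n) - a = d := by
  push_cast; ring

theorem natCast_add_ne {n a d : ℕ} [NeZero n] (hd0 : 0 < d) (hdn : d < n) :
    ((a + d : ℕ) : Fin n) ≠ a := by
  intro h
  have := congrArg Fin.val (natCast_add_sub_natCast (n := n) a d)
  rw [h, sub_self, Fin.val_zero, Fin.val_natCast, Nat.mod_eq_of_lt hdn] at this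
  omega

end Fin

namespace SimpleGraph

variable {W W' : Type*}

structure IsLayering (H : SimpleGraph W) (ℓ : W → ℤ) : Prop where
  le_add_one_of_adj : ∀ ⦃u v⦄, H.Adj u v → ℓ u ≤ ℓ v + 1
  adj_of_eq : ∀ ⦃u v⦄, u ≠ v → ℓ u = ℓ v → H.Adj u v

namespace IsLayering

variable {H : SimpleGraph W} {ℓ : W → ℤ}

theorem abs_sub_le_one (h : H.IsLayering ℓ) {u v : W} (huv : H.Adj u v) : |ℓ u - ℓ v| ≤ 1 :=
  abs_sub_le_iff.2
    ⟨by linarith [h.le_add_one_of_adj huv], by linarith [h.le_add_one_of_adj huv.symm]⟩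

theorem ne_of_not_adj (h : H.IsLayering ℓ) {u v : W} (huv : u ≠ v) (hadj : ¬ H.Adj u v) :
    ℓ u ≠ ℓ v :=
  fun heq => hadj (h.adj_of_eq huv heq)

theorem comap (h : H.IsLayering ℓ) {H' : SimpleGraph W'} (f : H' ↪g H) :
    H'.IsLayering (ℓ ∘ f) where
  le_add_one_of_adj _ _ huv := h.le_add_one_of_adj (f.map_rel_iff.2 huv)
  adj_of_eq _ _ huv heq := f.map_rel_iff.1 (h.adj_of_eq (f.injective.ne huv) heq)

end IsLayering

theorem cycleGraph_adj_natCast_add_iff {n a d : ℕ} [NeZero n] (hd0 : 0 < d) (hdn : d < n) :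
    (cycleGraph n).Adj ((a + d : ℕ) : Fin n) a ↔ d = 1 ∨ d + 1 = n := by
  rw [cycleGraph_adj', Fin.natCast_add_sub_natCast, ← neg_sub, Fin.natCast_add_sub_natCast,
    Fin.val_neg', Fin.val_natCast, Nat.mod_eq_of_lt hdn, Nat.mod_eq_of_lt (by omega)]
  omega

theorem cycleGraph_not_isLayering {n : ℕ} (hn : 5 ≤ n) (ℓ : Fin n → ℤ) :
    ¬ (cycleGraph n).IsLayering ℓ := by
  intro h
  have : NeZero n := ⟨by omega⟩
  have hper : Function.Periodic (fun a : ℕ => ℓ a) n := fun a => by simp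
  have hfar {a d : ℕ} (hd : 2 ≤ d) (hdn : d + 2 ≤ n) :
      ℓ ((a + d : ℕ) : Fin n) ≠ ℓ a :=
    h.ne_of_not_adj (Fin.natCast_add_ne (by omega) (by omega))
      (by rw [cycleGraph_adj_natCast_add_iff (by omega) (by omega)]; omega)
  obtain ⟨a, h2 | h3⟩ := hper.exists_eq_add_two_or_eq_add_three (by omega) fun a =>
    h.abs_sub_le_one ((cycleGraph_adj_natCast_add_iff one_pos (by omega)).2 (Or.inl rfl))
  · exact hfar le_rfl (by omega) h2
  · exact hfar (by omega) (by omega) h3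

theorem compl_cycleGraph_not_isLayering {n : ℕ} (hn : 5 ≤ n) (hodd : Odd n) (ℓ : Fin n → ℤ) :
    ¬ (cycleGraph n)ᶜ.IsLayering ℓ := by
  intro h
  have : NeZero n := ⟨by omega⟩
  have hper : Function.Periodic (fun a : ℕ => ℓ a) n := fun a => by simp
  obtain ⟨a, ha⟩ := hper.exists_one_lt_abs_sub_add_two hodd fun a =>
    h.ne_of_not_adj (Fin.natCast_add_ne one_pos (by omega)) fun hadj =>
      ((compl_adj _ _ _).1 hadj).2
        ((cycleGraph_adj_natCast_add_iff one_pos (by omega)).2 (Or.inl rfl))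
  refine ha.not_ge
    (h.abs_sub_le_one ((compl_adj _ _ _).2 ⟨Fin.natCast_add_ne two_pos (by omega), ?_⟩))
  rw [cycleGraph_adj_natCast_add_iff two_pos (by omega)]
  omega

end SimpleGraph

open SimpleGraph in
theorem isLayering_gprime {V : Type*} (G : SimpleGraph V) (s t : V) (k : ℕ) :
    (Gprime G s t k).IsLayering fun v => (G.dist s v : ℤ) where
  le_add_one_of_adj u v huv := by
    rw [Gprime, fromRel_adj] at huv
    omega
  adj_of_eq u v huv heq := (fromRel_adj ..).2 ⟨huv, Or.inl (Or.inl (by exact_mod_cast heq))⟩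

theorem stmt13_general {V : Type*} (G : SimpleGraph V) (s t : V) (k : ℕ) :
    ∀ n : ℕ, 5 ≤ n → n % 2 = 1 →
      IsEmpty (SimpleGraph.cycleGraph n ↪g Gprime G s t k) ∧
      IsEmpty ((SimpleGraph.cycleGraph n)ᶜ ↪g Gprime G s t k) := by
  intro n hn hodd
  have hG := isLayering_gprime G s t k
  exact ⟨⟨fun f => SimpleGraph.cycleGraph_not_isLayering hn _ (hG.comap f)⟩,
    ⟨fun f => SimpleGraph.compl_cycleGraph_not_isLayering hn (Nat.odd_iff.2 hodd) _
      (hG.comap f)⟩⟩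

/-- `G'` contains no induced cycle of odd length at least 5, and no induced
subgraph isomorphic to the complement of a cycle of odd length at least 5. -/
theorem stmt13 {V : Type*} [Fintype V] (G : SimpleGraph V) (s t : V) (k : ℕ)
    (hr : G.Reachable s t) (hd : G.dist s t = k) :
    ∀ n : ℕ, 5 ≤ n → n % 2 = 1 →
      IsEmpty (SimpleGraph.cycleGraph n ↪g Gprime G s t k) ∧
      IsEmpty ((SimpleGraph.cycleGraph n)ᶜ ↪g Gprime G s t k) :=
  stmt13_general G s t k
end

section
/- Let A and B be two independent sets of the same size in a finite simple graph G with A ≠ B. If the Piran graph Π(A,B) is even-hole-free, then there exists a vertex v ∈ B \ A that has at most one neighbor in A \ B. -/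
/-!
Suppose every vertex of `B \ A` has two neighbours in `A \ B`. The Piran graph is bipartite
with sides `A \ B` and `B \ A`, both of size `k ≥ 1`, so it has at least `2k` edges on `2k`
vertices and cannot be a forest. A shortest cycle in it has no chord (a chord would split off a
shorter cycle), so it is an induced cycle; by bipartiteness its length is even, hence at least 4,
and it is an even hole.
-/

variable {V : Type*} [DecidableEq V]

/-- A graph is even-hole-free if it contains no induced cycle with an even number of
vertices (a hole has at least 4 vertices). -/
def EvenHoleFree {W : Type*} (H : SimpleGraph W) : Prop :=
  ∀ n : ℕ, 4 ≤ n → n % 2 = 0 → IsEmpty (SimpleGraph.cycleGraph n ↪g H)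

/-- The Piran graph `Π(A,B)` of two independent sets `A`, `B` of `G`: the subgraph of `G`
induced by `(A \ B) ∪ (B \ A)`. -/
def Piran (G : SimpleGraph V) (A B : Finset V) :
    SimpleGraph ((↑A \ ↑B ∪ (↑B \ ↑A) : Set V)) :=
  G.induce (↑A \ ↑B ∪ (↑B \ ↑A) : Set V)

open Finset

namespace SimpleGraph

variable {W : Type*} {G : SimpleGraph W}

lemma IsAcyclic.card_edgeFinset_lt [Fintype W] [Nonempty W] [DecidableRel G.Adj]
    (h : G.IsAcyclic) : #G.edgeFinset < Fintype.card W := by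
  classical
  -- extend the forest to a spanning tree of the complete graph
  obtain ⟨T, hGT, -, hT⟩ := connected_top.exists_isTree_le_of_le_of_isAcyclic le_top h
  have := hT.card_edgeFinset
  have := card_le_card (edgeFinset_mono hGT)
  omega

lemma cycleGraph_adj_iff_val {n : ℕ} (hn : 2 ≤ n) {u v : Fin n} :
    (cycleGraph n).Adj u v ↔ u.val + 1 = v.val ∨ v.val + 1 = u.val ∨
      (u.val = 0 ∧ v.val + 1 = n) ∨ (v.val = 0 ∧ u.val + 1 = n) := by
  have := u.isLt
  have := v.isLt
  rw [cycleGraph_adj']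
  rcases lt_trichotomy u v with h | rfl | h
  · rw [Fin.coe_sub_iff_lt.2 h, Fin.coe_sub_iff_le.2 h.le]
    omega
  · rw [Fin.coe_sub_iff_le.2 le_rfl]
    omega
  · rw [Fin.coe_sub_iff_le.2 h.le, Fin.coe_sub_iff_lt.2 h]
    omega

lemma degree_induce_eq_ncard {s : Set W} (v : s) [Fintype ((G.induce s).neighborSet v)] :
    (G.induce s).degree v = (G.neighborSet v ∩ s).ncard := by
  have : G.neighborSet v ∩ s = Subtype.val '' (G.induce s).neighborSet v := by
    ext w
    simp
  rw [this, Set.ncard_image_of_injective _ Subtype.val_injective, ← Nat.card_coe_set_eq,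
    Nat.card_eq_fintype_card, card_neighborSet_eq_degree]

lemma Copy.exists_cycleGraph_isContained_of_chord {n : ℕ} (c : Copy (cycleGraph n) G)
    {a b : Fin n} (hab : a ≠ b) (hnadj : ¬(cycleGraph n).Adj a b) (hadj : G.Adj (c a) (c b)) :
    ∃ m, 3 ≤ m ∧ m < n ∧ cycleGraph m ⊑ G := by
  wlog hlt : a < b generalizing a b
  · exact this hab.symm (fun h => hnadj h.symm) hadj.symm (lt_of_le_of_ne (not_lt.1 hlt) hab.symm)
  have hn : 2 ≤ n := by omega
  rw [cycleGraph_adj_iff_val hn] at hnadj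
  have hm : 2 ≤ b.val - a.val + 1 := by omega
  -- the arc `a, a + 1, …, b` closed up by the chord
  refine ⟨b.val - a.val + 1, by omega, by omega, ⟨⟨fun k => c ⟨a + k, by omega⟩, ?_⟩, ?_⟩⟩
  · intro k l hkl
    rw [cycleGraph_adj_iff_val hm] at hkl
    rcases hkl with h | h | ⟨hk, hl⟩ | ⟨hl, hk⟩
    · exact c.toHom.map_adj ((cycleGraph_adj_iff_val hn).2 (by simp only; omega))
    · exact c.toHom.map_adj ((cycleGraph_adj_iff_val hn).2 (by simp only; omega))
    · convert hadj using 2 <;> ext <;> simp only <;> omega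
    · convert hadj.symm using 2 <;> ext <;> simp only <;> omega
  · intro k l hkl
    have := Fin.val_eq_of_eq (c.injective hkl)
    ext
    simp only at this
    omega

lemma exists_cycleGraph_embedding_of_not_isAcyclic (h : ¬G.IsAcyclic) :
    ∃ n, 3 ≤ n ∧ Nonempty (cycleGraph n ↪g G) := by
  classical
  have hex : ∃ n, 3 ≤ n ∧ cycleGraph n ⊑ G := by
    simpa [isAcyclic_iff_free_cycleGraph, Free] using h
  obtain ⟨hn, ⟨c⟩⟩ := Nat.find_spec hex
  refine ⟨Nat.find hex, hn, ⟨⟨c.toEmbedding, fun {a b} => ⟨fun hadj => ?_, c.toHom.map_adj⟩⟩⟩⟩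
  by_contra hnadj
  have hab : a ≠ b := fun h => hadj.ne (congrArg c h)
  obtain ⟨m, hm, hmn, hcopy⟩ := c.exists_cycleGraph_isContained_of_chord hab hnadj hadj
  exact Nat.find_min hex hmn ⟨hm, hcopy⟩

lemma IsBipartite.even_of_cycleGraph_isContained {n : ℕ} (h : G.IsBipartite) (hn : 2 ≤ n)
    (hc : cycleGraph n ⊑ G) : Even n := by
  by_contra hodd
  have := (h.of_hom hc.some.toHom).chromaticNumber_le
  rw [chromaticNumber_cycleGraph_of_odd n hn (Nat.not_even_iff_odd.1 hodd)] at this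
  norm_num at this

end SimpleGraph

open SimpleGraph

lemma EvenHoleFree.isAcyclic_of_isBipartite {W : Type*} {H : SimpleGraph W} (hH : EvenHoleFree H)
    (hbip : H.IsBipartite) : H.IsAcyclic := by
  by_contra hcyc
  obtain ⟨n, hn, ⟨e⟩⟩ := exists_cycleGraph_embedding_of_not_isAcyclic hcyc
  have heven := Nat.even_iff.1 (hbip.even_of_cycleGraph_isContained (by omega) ⟨e.toCopy⟩)
  exact (hH n (by omega) heven).false e

section Piran

variable {α : Type*} (G : SimpleGraph α) {A B : Finset α}

lemma val_mem_or_val_mem_of_piran (x : (↑A \ ↑B ∪ (↑B \ ↑A) : Set α)) :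
    x.1 ∈ A ∧ x.1 ∉ B ∨ x.1 ∈ B ∧ x.1 ∉ A := by
  simpa only [Set.mem_union, Set.mem_sdiff, Finset.mem_coe] using x.2

lemma isBipartiteWith_piran (hA : IsIndep G A) (hB : IsIndep G B) :
    (Piran G A B).IsBipartiteWith {x | x.1 ∈ A} {x | x.1 ∈ B} := by
  refine ⟨Set.disjoint_left.2 fun x hxA hxB => ?_, fun x y hxy => ?_⟩
  · have := val_mem_or_val_mem_of_piran x
    grind
  have hAA : ¬(x.1 ∈ A ∧ y.1 ∈ A) := fun h => hA _ h.1 _ h.2 hxy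
  have hBB : ¬(x.1 ∈ B ∧ y.1 ∈ B) := fun h => hB _ h.1 _ h.2 hxy
  have := val_mem_or_val_mem_of_piran x
  have := val_mem_or_val_mem_of_piran y
  grind

lemma ncard_le_degree_piran [DecidableEq α] (x : (↑A \ ↑B ∪ (↑B \ ↑A) : Set α))
    [Fintype ((Piran G A B).neighborSet x)] :
    {w | w ∈ A \ B ∧ G.Adj x w}.ncard ≤ (Piran G A B).degree x := by
  refine le_of_le_of_eq ?_ (@degree_induce_eq_ncard _ G _ x ‹_›).symm
  exact Set.ncard_le_ncard (fun w hw => ⟨hw.2, Or.inl (by simpa using hw.1)⟩)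
    ((Set.toFinite _).subset Set.inter_subset_right)

lemma not_isAcyclic_piran [DecidableEq α] (hA : IsIndep G A) (hB : IsIndep G B) (hcard : #A = #B)
    (hne : A ≠ B) (hdeg : ∀ v ∈ B \ A, 1 < {w : α | w ∈ A \ B ∧ G.Adj v w}.ncard) :
    ¬(Piran G A B).IsAcyclic := by
  classical
  let s := A.subtype (· ∈ (↑A \ ↑B ∪ (↑B \ ↑A) : Set α))
  let t := B.subtype (· ∈ (↑A \ ↑B ∪ (↑B \ ↑A) : Set α))
  have hbip : (Piran G A B).IsBipartiteWith ↑s ↑t := by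
    convert isBipartiteWith_piran G hA hB <;> ext <;> simp [s, t]
  have hs : #s = #(A \ B) := by
    rw [card_subtype, sdiff_eq_filter]
    exact congrArg card (filter_congr fun v hv => by simp [hv])
  have ht : #t = #(B \ A) := by
    rw [card_subtype, sdiff_eq_filter]
    exact congrArg card (filter_congr fun v hv => by simp [hv])
  have hcover : Fintype.card (↑A \ ↑B ∪ (↑B \ ↑A) : Set α) ≤ #s + #t := by
    refine (card_le_card fun x _ => ?_).trans (card_union_le s t)
    rcases val_mem_or_val_mem_of_piran x with h | h <;> simp [s, t, h.1]
  obtain ⟨v, hv⟩ : (B \ A).Nonempty := by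
    rw [nonempty_iff_ne_empty, Ne, sdiff_eq_empty_iff_subset]
    exact fun h => hne (eq_of_subset_of_card_le h hcard.le).symm
  have : Nonempty (↑A \ ↑B ∪ (↑B \ ↑A) : Set α) := ⟨⟨v, by grind⟩⟩
  have hdeg' : ∀ x ∈ t, 2 ≤ (Piran G A B).degree x := by
    intro x hx
    rw [mem_subtype] at hx
    have hxBA : x.1 ∈ B \ A := by
      rcases val_mem_or_val_mem_of_piran x with h | h
      · exact absurd hx h.2
      · exact mem_sdiff.2 h
    exact (hdeg _ hxBA).trans_le (ncard_le_degree_piran G x)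
  have hedges : 2 * #t ≤ #(Piran G A B).edgeFinset := by
    rw [← isBipartiteWith_sum_degrees_eq_card_edges' hbip, mul_comm, ← smul_eq_mul]
    exact card_nsmul_le_sum t _ 2 hdeg'
  have hk : #(A \ B) = #(B \ A) := card_sdiff_comm hcard
  intro hacyc
  have hlt := hacyc.card_edgeFinset_lt
  omega

end Piran

theorem stmt14_general {V : Type*} [DecidableEq V] (G : SimpleGraph V)
    (A B : Finset V) (hA : IsIndep G A) (hB : IsIndep G B)
    (hcard : A.card = B.card) (hne : A ≠ B)
    (hehf : EvenHoleFree (Piran G A B)) :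
    ∃ v ∈ B \ A, {w : V | w ∈ A \ B ∧ G.Adj v w}.ncard ≤ 1 := by
  by_contra! hdeg
  exact not_isAcyclic_piran G hA hB hcard hne hdeg
    (hehf.isAcyclic_of_isBipartite (isBipartiteWith_piran G hA hB).isBipartite)

/-- if `A` and `B` are distinct independent sets of the same size in `G`
and the Piran graph `Π(A,B)` is even-hole-free, then some vertex of `B \ A` has at most
one neighbor in `A \ B`. -/
theorem stmt14 {V : Type*} [DecidableEq V] [Fintype V] (G : SimpleGraph V)
    (A B : Finset V) (hA : IsIndep G A) (hB : IsIndep G B)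
    (hcard : A.card = B.card) (hne : A ≠ B)
    (hehf : EvenHoleFree (Piran G A B)) :
    ∃ v ∈ B \ A, {w : V | w ∈ A \ B ∧ G.Adj v w}.ncard ≤ 1 :=
  stmt14_general G A B hA hB hcard hne hehf
end

section
/- Let G be a finite connected P_4-free graph and let A and B be independent sets of G with |A| = |B| ≥ 2. Then A and B are TS-reconfigurable in G if and only if there is a co-component D of G with A ∪ B ⊆ D such that A and B are TS-reconfigurable in the induced subgraph G[D]. -/
/-- `A` and `B` are TS-reconfigurable in `H`: there is a sequence of independent sets from
`A` to `B` in which consecutive sets are TS-adjacent. -/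
def TSReconf {W : Type*} (H : SimpleGraph W) (A B : Set W) : Prop :=
  ∃ (ℓ : ℕ) (ρ : ℕ → Set W), ρ 0 = A ∧ ρ ℓ = B ∧ (∀ i ≤ ℓ, IsIndepSet H (ρ i)) ∧
    ∀ i < ℓ, TSAdj H (ρ i) (ρ (i + 1))

open Relation
open SimpleGraph (ConnectedComponent Embedding)

section TokenSliding

variable {V W : Type*} {G : SimpleGraph V} {H : SimpleGraph W}

lemma SimpleGraph.Embedding.coe_induce (s : Set V) :
    ⇑(Embedding.induce s : G.induce s ↪g G) = Subtype.val :=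
  rfl

lemma SimpleGraph.Embedding.range_induce (s : Set V) :
    Set.range (Embedding.induce s : G.induce s ↪g G) = s := by
  rw [Embedding.coe_induce, Subtype.range_coe]

namespace IsIndepSet

lemma subset_supp_connectedComponentMk {S : Set V} (hS : IsIndepSet G S) {u : V}
    (hu : u ∈ S) : S ⊆ (Gᶜ.connectedComponentMk u).supp := by
  intro v hv
  rw [ConnectedComponent.mem_supp_iff, ConnectedComponent.eq]
  by_cases h : v = u
  · rw [h]
  · exact ((G.compl_adj v u).mpr ⟨h, hS v hv u hu⟩).reachable

lemma comap (f : H →g G) {S : Set V} (hS : IsIndepSet G S) : IsIndepSet H (f ⁻¹' S) :=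
  fun _ hu _ hv huv => hS _ hu _ hv (f.map_adj huv)

lemma map (f : H ↪g G) {S : Set W} (hS : IsIndepSet H S) : IsIndepSet G (f '' S) := by
  rintro _ ⟨u, hu, rfl⟩ _ ⟨v, hv, rfl⟩ huv
  exact hS u hu v hv (f.map_adj_iff.mp huv)

end IsIndepSet

namespace TSAdj

lemma ncard_eq {X Y : Set V} (h : TSAdj G X Y) : Y.ncard = X.ncard := by
  obtain ⟨u, hu, v, hv, -, rfl⟩ := h
  exact Set.ncard_exchange hv hu

lemma inter_nonempty {X Y : Set V} (h : TSAdj G X Y) (hX : 2 ≤ X.ncard) :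
    (X ∩ Y).Nonempty := by
  obtain ⟨u, -, v, -, -, rfl⟩ := h
  obtain ⟨w, hw, hwu⟩ := Set.exists_ne_of_one_lt_ncard hX u
  exact ⟨w, hw, Set.mem_insert_of_mem _ ⟨hw, hwu⟩⟩

lemma map (f : H ↪g G) {X Y : Set W} (h : TSAdj H X Y) : TSAdj G (f '' X) (f '' Y) := by
  obtain ⟨u, hu, v, hv, huv, rfl⟩ := h
  refine ⟨f u, Set.mem_image_of_mem f hu, f v, ?_, f.map_adj_iff.mpr huv, ?_⟩
  · rwa [f.injective.mem_set_image]
  · rw [Set.image_insert_eq, Set.image_sdiff f.injective, Set.image_singleton]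

lemma comap (f : H ↪g G) {X Y : Set V} (h : TSAdj G X Y) (hX : X ⊆ Set.range f)
    (hY : Y ⊆ Set.range f) : TSAdj H (f ⁻¹' X) (f ⁻¹' Y) := by
  obtain ⟨_, hu, _, hv, huv, rfl⟩ := h
  obtain ⟨u, rfl⟩ := hX hu
  obtain ⟨v, rfl⟩ := hY (Set.mem_insert _ _)
  refine ⟨u, hu, v, hv, f.map_adj_iff.mp huv, ?_⟩
  ext x
  simp [f.injective.eq_iff]

end TSAdj

def TSStep (H : SimpleGraph W) (X Y : Set W) : Prop :=
  IsIndepSet H X ∧ IsIndepSet H Y ∧ TSAdj H X Y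

namespace TSStep

lemma map (f : H ↪g G) {X Y : Set W} (h : TSStep H X Y) : TSStep G (f '' X) (f '' Y) :=
  ⟨h.1.map f, h.2.1.map f, h.2.2.map f⟩

lemma comap (f : H ↪g G) {X Y : Set V} (h : TSStep G X Y) (hX : X ⊆ Set.range f)
    (hY : Y ⊆ Set.range f) : TSStep H (f ⁻¹' X) (f ⁻¹' Y) :=
  ⟨h.1.comap f.toHom, h.2.1.comap f.toHom, h.2.2.comap f hX hY⟩

lemma subset_supp {X Y : Set V} {c : Gᶜ.ConnectedComponent} (h : TSStep G X Y)
    (hX2 : 2 ≤ X.ncard) (hX : X ⊆ c.supp) : Y ⊆ c.supp := by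
  obtain ⟨w, hwX, hwY⟩ := h.2.2.inter_nonempty hX2
  have hw : Gᶜ.connectedComponentMk w = c := hX hwX
  exact hw ▸ h.2.1.subset_supp_connectedComponentMk hwY

end TSStep

lemma tsReconf_iff_reflTransGen {A B : Set W} :
    TSReconf H A B ↔ IsIndepSet H A ∧ ReflTransGen (TSStep H) A B := by
  constructor
  · rintro ⟨ℓ, ρ, rfl, rfl, hind, hadj⟩
    refine ⟨hind 0 ℓ.zero_le, ?_⟩
    suffices ∀ i ≤ ℓ, ReflTransGen (TSStep H) (ρ 0) (ρ i) from this ℓ le_rfl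
    intro i hi
    induction i with
    | zero => exact ReflTransGen.refl
    | succ i ih => exact (ih (by omega)).tail ⟨hind i (by omega), hind (i + 1) hi, hadj i hi⟩
  · rintro ⟨hA, h⟩
    induction h with
    | refl => exact ⟨0, fun _ => A, rfl, rfl, fun _ _ => hA, fun i hi => absurd hi i.not_lt_zero⟩
    | @tail Y Z _ hYZ ih =>
      obtain ⟨ℓ, ρ, h0, hℓ, hind, hadj⟩ := ih
      refine ⟨ℓ + 1, fun i => if i ≤ ℓ then ρ i else Z, by simp [h0], by simp, ?_, ?_⟩
      · intro i _
        dsimp only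
        split_ifs with hi
        exacts [hind i hi, hYZ.2.1]
      · intro i hi
        obtain hi | rfl : i < ℓ ∨ i = ℓ := by omega
        · simpa [hi.le, Nat.succ_le_of_lt hi] using hadj i hi
        · simpa [hℓ] using hYZ.2.2

lemma ncard_eq_of_reflTransGen_tsStep {A B : Set V} (h : ReflTransGen (TSStep G) A B) :
    B.ncard = A.ncard := by
  induction h with
  | refl => rfl
  | tail _ hYZ ih => exact hYZ.2.2.ncard_eq.trans ih

namespace TSReconf

lemma map (f : H ↪g G) {A B : Set W} (h : TSReconf H A B) : TSReconf G (f '' A) (f '' B) := by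
  obtain ⟨hA, hAB⟩ := tsReconf_iff_reflTransGen.mp h
  exact tsReconf_iff_reflTransGen.mpr ⟨hA.map f, hAB.lift _ fun _ _ hXY => hXY.map f⟩

lemma of_induce {s A B : Set V}
    (h : TSReconf (G.induce s) (Subtype.val ⁻¹' A) (Subtype.val ⁻¹' B)) (hA : A ⊆ s)
    (hB : B ⊆ s) : TSReconf G A B := by
  have hGs := h.map (Embedding.induce s)
  rwa [Embedding.coe_induce, Subtype.image_preimage_coe, Subtype.image_preimage_coe,
    Set.inter_eq_right.mpr hA, Set.inter_eq_right.mpr hB] at hGs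

lemma induce_supp {A B : Set V} {c : Gᶜ.ConnectedComponent} (h : TSReconf G A B)
    (h2 : 2 ≤ A.ncard) (hA : A ⊆ c.supp) :
    B ⊆ c.supp ∧ TSReconf (G.induce c.supp) (Subtype.val ⁻¹' A) (Subtype.val ⁻¹' B) := by
  obtain ⟨hAind, hAB⟩ := tsReconf_iff_reflTransGen.mp h
  suffices B ⊆ c.supp ∧ ReflTransGen (TSStep (G.induce c.supp)) (Subtype.val ⁻¹' A)
      (Subtype.val ⁻¹' B) from
    ⟨this.1, tsReconf_iff_reflTransGen.mpr ⟨hAind.comap (Embedding.induce c.supp).toHom, this.2⟩⟩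
  clear h
  induction hAB with
  | refl => exact ⟨hA, ReflTransGen.refl⟩
  | @tail Y Z hAY hYZ ih =>
    obtain ⟨hY, hchain⟩ := ih
    have hZ : Z ⊆ c.supp := hYZ.subset_supp (ncard_eq_of_reflTransGen_tsStep hAY ▸ h2) hY
    have hrange := Embedding.range_induce (G := G) c.supp
    exact ⟨hZ, hchain.tail (hYZ.comap _ (hY.trans hrange.ge) (hZ.trans hrange.ge))⟩

end TSReconf

end TokenSliding

theorem stmt18_general {V : Type*} (G : SimpleGraph V)
    (A B : Set V)
    (h2 : 2 ≤ A.ncard) :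
    TSReconf G A B ↔
      ∃ c : Gᶜ.ConnectedComponent, A ∪ B ⊆ c.supp ∧
        TSReconf (G.induce c.supp) (Subtype.val ⁻¹' A) (Subtype.val ⁻¹' B) := by
  constructor
  · intro h
    obtain ⟨a, ha⟩ : A.Nonempty := Set.nonempty_of_ncard_ne_zero (by omega)
    have hA := (tsReconf_iff_reflTransGen.mp h).1.subset_supp_connectedComponentMk ha
    obtain ⟨hB, hind⟩ := h.induce_supp h2 hA
    exact ⟨_, Set.union_subset hA hB, hind⟩
  · rintro ⟨c, hAB, h⟩
    exact h.of_induce (Set.subset_union_left.trans hAB) (Set.subset_union_right.trans hAB)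

/-- for a finite connected `P_4`-free graph `G` and independent sets `A`,
`B` with `|A| = |B| ≥ 2`, the sets `A` and `B` are TS-reconfigurable in `G` iff there is
a co-component `D` of `G` (the vertex set of a connected component of the complement of
`G`) with `A ∪ B ⊆ D` such that `A` and `B` are TS-reconfigurable in the induced
subgraph `G[D]`. -/
theorem stmt18 {V : Type*} [Fintype V] (G : SimpleGraph V)
    (hconn : G.Connected)
    (hP4 : IsEmpty (SimpleGraph.pathGraph 4 ↪g G))
    (A B : Set V) (hA : IsIndepSet G A) (hB : IsIndepSet G B)
    (hcard : A.ncard = B.ncard) (h2 : 2 ≤ A.ncard) :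
    TSReconf G A B ↔
      ∃ c : Gᶜ.ConnectedComponent, A ∪ B ⊆ c.supp ∧
        TSReconf (G.induce c.supp) (Subtype.val ⁻¹' A) (Subtype.val ⁻¹' B) :=
  stmt18_general G A B h2
end

section
/- Every finite connected graph that is claw-free and paw-free and contains an induced subgraph isomorphic to the path on 4 vertices is isomorphic to a path or to a cycle. -/
/-!
In a paw-free graph, a neighbour of a vertex lying in a triangle again lies in a triangle, so in a
connected paw-free graph either all vertices or none lie in triangles. The middle vertex `c` of an
induced path `abcd` lies in no triangle: otherwise `b` and `c` would have a common neighbour `w`,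
paw-freeness would force `w` to be adjacent to `a` and `d`, and the triangle `wab` with the pendant
edge `wd` would be a paw. So the graph is triangle-free, and claw-freeness then bounds every degree
by 2. In a connected finite graph of maximum degree at most 2, a longest path visits every vertex
and the only possible chord joins its two ends: the graph is a path or a cycle.
-/

/-- The claw `K_{1,3}`. -/
def claw : SimpleGraph (Fin 1 ⊕ Fin 3) := completeBipartiteGraph (Fin 1) (Fin 3)

/-- The paw: a triangle (on `0, 1, 2`) with a pendant vertex (`3`, attached to `2`). -/
def paw : SimpleGraph (Fin 4) :=
  SimpleGraph.fromRel (fun a b =>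
    (a = 0 ∧ b = 1) ∨ (a = 0 ∧ b = 2) ∨ (a = 1 ∧ b = 2) ∨ (a = 2 ∧ b = 3))

lemma Fin.val_sub_eq_one_iff {n : ℕ} (hn : 2 ≤ n) {i j : Fin n} :
    (i - j).val = 1 ↔ i.val = j.val + 1 ∨ (j.val + 1 = n ∧ i.val = 0) := by
  rcases le_or_gt j i with h | h
  · rw [Fin.sub_val_of_le h]; omega
  · rw [Fin.coe_sub_iff_lt.mpr h]; omega

namespace SimpleGraph

variable {V : Type*} {G : SimpleGraph V}

def MaxDegreeLeTwo (G : SimpleGraph V) : Prop :=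
  ∀ v a b c : V, G.Adj v a → G.Adj v b → G.Adj v c → a = b ∨ a = c ∨ b = c

def InTriangle (G : SimpleGraph V) (v : V) : Prop :=
  ∃ p q, G.Adj v p ∧ G.Adj v q ∧ G.Adj p q

lemma eq_or_eq_or_adj_or_adj_of_paw_free (hpaw : IsEmpty (paw ↪g G)) {x y z w : V}
    (hxy : G.Adj x y) (hxz : G.Adj x z) (hyz : G.Adj y z) (hxw : G.Adj x w) :
    w = y ∨ w = z ∨ G.Adj w y ∨ G.Adj w z := by
  by_contra! h
  obtain ⟨hwy, hwz, nwy, nwz⟩ := h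
  have hwx : w ≠ x := hxw.ne.symm
  have hyx : y ≠ x := hxy.ne.symm
  have hzx : z ≠ x := hxz.ne.symm
  have hyz' : y ≠ z := hyz.ne
  let f : Fin 4 → V := ![y, z, x, w]
  have hf : Function.Injective f := by
    intro i j h; fin_cases i <;> fin_cases j <;> simp_all [f, eq_comm]
  refine hpaw.false ⟨⟨f, hf⟩, ?_⟩
  intro i j; fin_cases i <;> fin_cases j <;> simp_all [f, paw, G.adj_comm]

lemma eq_or_adj_of_claw_free (hclaw : IsEmpty (claw ↪g G)) {v a b c : V}
    (hva : G.Adj v a) (hvb : G.Adj v b) (hvc : G.Adj v c) :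
    a = b ∨ a = c ∨ b = c ∨ G.Adj a b ∨ G.Adj a c ∨ G.Adj b c := by
  by_contra! h
  obtain ⟨hab, hac, hbc, nab, nac, nbc⟩ := h
  have hav : a ≠ v := hva.ne.symm
  have hbv : b ≠ v := hvb.ne.symm
  have hcv : c ≠ v := hvc.ne.symm
  let f : Fin 1 ⊕ Fin 3 → V := Sum.elim (fun _ => v) ![a, b, c]
  have hf : Function.Injective f := by
    rintro (i | i) (j | j) h <;> fin_cases i <;> fin_cases j <;> simp_all [f]
  refine hclaw.false ⟨⟨f, hf⟩, ?_⟩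
  rintro (i | i) (j | j) <;> fin_cases i <;> fin_cases j <;> simp_all [f, claw, G.adj_comm]

lemma exists_adj_adj_of_paw_free (hpaw : IsEmpty (paw ↪g G)) {u v : V} (hu : G.InTriangle u)
    (huv : G.Adj u v) : ∃ w, G.Adj u w ∧ G.Adj v w := by
  obtain ⟨p, q, hup, huq, hpq⟩ := hu
  rcases eq_or_eq_or_adj_or_adj_of_paw_free hpaw hup huq hpq huv with rfl | rfl | h | h
  · exact ⟨q, huq, hpq⟩
  · exact ⟨p, hup, hpq.symm⟩
  · exact ⟨p, hup, h⟩
  · exact ⟨q, huq, h⟩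

lemma InTriangle.of_adj_of_paw_free (hpaw : IsEmpty (paw ↪g G)) {u v : V} (hu : G.InTriangle u)
    (huv : G.Adj u v) : G.InTriangle v := by
  obtain ⟨w, huw, hvw⟩ := exists_adj_adj_of_paw_free hpaw hu huv
  exact ⟨u, w, huv.symm, hvw, huw⟩

lemma InTriangle.of_reachable_of_paw_free (hpaw : IsEmpty (paw ↪g G)) {u v : V}
    (hu : G.InTriangle u) (huv : G.Reachable u v) : G.InTriangle v := by
  rw [reachable_iff_reflTransGen] at huv
  induction huv with
  | refl => exact hu
  | tail _ hvw ih => exact ih.of_adj_of_paw_free hpaw hvw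

lemma not_inTriangle_of_paw_free (hpaw : IsEmpty (paw ↪g G)) (e : pathGraph 4 ↪g G) :
    ¬ G.InTriangle (e 2) := by
  intro hc
  have adj (i j : Fin 4) : G.Adj (e i) (e j) ↔ i.val + 1 = j.val ∨ j.val + 1 = i.val :=
    e.map_adj_iff.trans pathGraph_adj
  have hab : G.Adj (e 0) (e 1) := (adj 0 1).2 (by decide)
  have hbc : G.Adj (e 1) (e 2) := (adj 1 2).2 (by decide)
  have hcd : G.Adj (e 2) (e 3) := (adj 2 3).2 (by decide)
  have nac : ¬ G.Adj (e 0) (e 2) := by rw [adj]; decide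
  have nad : ¬ G.Adj (e 0) (e 3) := by rw [adj]; decide
  have nbd : ¬ G.Adj (e 1) (e 3) := by rw [adj]; decide
  have hac : e 0 ≠ e 2 := e.injective.ne (by decide)
  have had : e 0 ≠ e 3 := e.injective.ne (by decide)
  have hbd : e 1 ≠ e 3 := e.injective.ne (by decide)
  obtain ⟨w, hcw, hbw⟩ := exists_adj_adj_of_paw_free hpaw hc hbc.symm
  have haw : G.Adj (e 0) w := by
    rcases eq_or_eq_or_adj_or_adj_of_paw_free hpaw hbc hbw hcw hab.symm with h | rfl | h | h
    exacts [absurd h hac, absurd hcw.symm nac, absurd h nac, h]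
  have hdw : G.Adj (e 3) w := by
    rcases eq_or_eq_or_adj_or_adj_of_paw_free hpaw hbc.symm hcw hbw hcd with h | rfl | h | h
    exacts [absurd h.symm hbd, absurd hbw nbd, absurd h.symm nbd, h]
  rcases eq_or_eq_or_adj_or_adj_of_paw_free hpaw haw.symm hbw.symm hab hdw.symm with h | h | h | h
  exacts [had h.symm, hbd h.symm, nad h.symm, nbd h.symm]

lemma forall_not_inTriangle_of_paw_free (hconn : G.Connected) (hpaw : IsEmpty (paw ↪g G))
    (e : pathGraph 4 ↪g G) (v : V) : ¬ G.InTriangle v := fun hv =>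
  not_inTriangle_of_paw_free hpaw e (hv.of_reachable_of_paw_free hpaw (hconn v _))

lemma maxDegreeLeTwo_of_claw_free (hclaw : IsEmpty (claw ↪g G))
    (htri : ∀ v, ¬ G.InTriangle v) : G.MaxDegreeLeTwo := by
  intro v a b c hva hvb hvc
  rcases eq_or_adj_of_claw_free hclaw hva hvb hvc with h | h | h | h | h | h
  exacts [.inl h, .inr (.inl h), .inr (.inr h), (htri v ⟨a, b, hva, hvb, h⟩).elim,
    (htri v ⟨a, c, hva, hvc, h⟩).elim, (htri v ⟨b, c, hvb, hvc, h⟩).elim]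

section LongestPath

variable {l : List V}

lemma eq_or_eq_of_adj_getElem (hdeg : G.MaxDegreeLeTwo) (hnd : l.Nodup) (hch : l.IsChain G.Adj)
    {k : ℕ} (hk₀ : 0 < k) (hk : k + 1 < l.length) {y : V} (hy : G.Adj l[k] y) :
    y = l[k - 1] ∨ y = l[k + 1] := by
  obtain ⟨m, rfl⟩ : ∃ m, k = m + 1 := ⟨k - 1, by omega⟩
  have hne : l[m] ≠ l[m + 2] := by rw [ne_eq, hnd.getElem_inj_iff]; omega
  rcases hdeg _ _ _ _ (hch.getElem m (by omega)).symm (hch.getElem (m + 1) hk) hy with h | h | h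
  · exact absurd h hne
  · exact Or.inl h.symm
  · exact Or.inr h.symm

lemma eq_add_one_or_of_adj_getElem (hdeg : G.MaxDegreeLeTwo) (hnd : l.Nodup)
    (hch : l.IsChain G.Adj) {i j : ℕ} (hij : i < j) (hj : j < l.length) (h : G.Adj l[i] l[j]) :
    j = i + 1 ∨ (i = 0 ∧ j + 1 = l.length) := by
  rcases Nat.eq_zero_or_pos i with rfl | hi
  · by_contra! hcon
    rcases eq_or_eq_of_adj_getElem hdeg hnd hch (k := j) (by omega) (by omega) h.symm
      with h' | h' <;> rw [hnd.getElem_inj_iff] at h' <;> omega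
  · rcases eq_or_eq_of_adj_getElem hdeg hnd hch hi (by omega) h with h' | h' <;>
      rw [hnd.getElem_inj_iff] at h' <;> omega

lemma adj_getElem_cases (hdeg : G.MaxDegreeLeTwo) (hnd : l.Nodup) (hch : l.IsChain G.Adj)
    {i j : ℕ} (hi : i < l.length) (hj : j < l.length) (h : G.Adj l[i] l[j]) :
    i + 1 = j ∨ j + 1 = i ∨ (i = 0 ∧ j + 1 = l.length) ∨ (j = 0 ∧ i + 1 = l.length) := by
  rcases lt_trichotomy i j with hij | rfl | hij
  · have := eq_add_one_or_of_adj_getElem hdeg hnd hch hij hj h; omega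
  · exact (G.irrefl h).elim
  · have := eq_add_one_or_of_adj_getElem hdeg hnd hch hij hi h.symm; omega

lemma exists_isChain_length_max [Finite V] (G : SimpleGraph V) :
    ∃ l : List V, l.Nodup ∧ l.IsChain G.Adj ∧
      ∀ l' : List V, l'.Nodup → l'.IsChain G.Adj → l'.length ≤ l.length := by
  have := Fintype.ofFinite V
  let S : Set ℕ := {n | ∃ l : List V, l.Nodup ∧ l.IsChain G.Adj ∧ l.length = n}
  have hbdd : BddAbove S :=
    ⟨Fintype.card V, by rintro _ ⟨l, hl, -, rfl⟩; exact hl.length_le_card⟩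
  obtain ⟨l, hnd, hch, hl⟩ := Nat.sSup_mem (s := S) ⟨0, [], List.nodup_nil, .nil, rfl⟩ hbdd
  exact ⟨l, hnd, hch, fun l' hnd' hch' => hl ▸ le_csSup hbdd ⟨l', hnd', hch', rfl⟩⟩

lemma mem_of_isChain_length_max (hconn : G.Connected) (hdeg : G.MaxDegreeLeTwo) (hnd : l.Nodup)
    (hch : l.IsChain G.Adj)
    (hmax : ∀ l' : List V, l'.Nodup → l'.IsChain G.Adj → l'.length ≤ l.length) (v : V) :
    v ∈ l := by
  by_contra hv
  have hlen : 0 < l.length := hmax [v] (List.nodup_singleton v) (.singleton v)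
  obtain ⟨⟨⟨z, y⟩, hzy⟩, -, hz, hy⟩ :=
    (hconn l[0] v).some.exists_boundary_dart {x | x ∈ l} (List.getElem_mem _) hv
  simp only [Set.mem_ofPred_eq] at hz hy
  obtain ⟨k, hk, rfl⟩ := List.getElem_of_mem hz
  by_cases hk₀ : k = 0
  · subst hk₀
    have := hmax (y :: l) (hnd.cons hy)
      (hch.cons (by simpa [List.head?_eq_getElem?, hlen] using hzy.symm))
    simp at this
  by_cases hkl : k + 1 = l.length
  · have := hmax (l ++ [y])
      (List.nodup_append.2 ⟨hnd, List.nodup_singleton y,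
        fun _ ha _ hb => List.mem_singleton.1 hb ▸ ne_of_mem_of_not_mem ha hy⟩)
      (hch.append (.singleton y) (by simpa [List.getLast?_eq_getElem?, ← hkl] using hzy))
    simp at this
  rcases eq_or_eq_of_adj_getElem hdeg hnd hch (by omega) (by omega) hzy with rfl | rfl <;>
    exact hy (List.getElem_mem _)

lemma nonempty_iso_pathGraph (hdeg : G.MaxDegreeLeTwo) (hnd : l.Nodup) (hch : l.IsChain G.Adj)
    (hcov : ∀ v, v ∈ l)
    (hend : ∀ h : 3 ≤ l.length, ¬ G.Adj l[0] l[l.length - 1]) :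
    Nonempty (G ≃g pathGraph l.length) := by
  let e : Fin l.length ≃ V := .ofBijective _ (List.Nodup.getBijectionOfForallMemList l hnd hcov).2
  refine ⟨(RelIso.mk e fun {i j} => ?_).symm⟩
  obtain ⟨i, hi⟩ := i
  obtain ⟨j, hj⟩ := j
  simp only [e, Equiv.ofBijective_apply, List.Nodup.getBijectionOfForallMemList_coe,
    List.get_eq_getElem, pathGraph_adj]
  refine ⟨fun h => ?_, ?_⟩
  · rcases adj_getElem_cases hdeg hnd hch hi hj h with h' | h' | ⟨rfl, hj'⟩ | ⟨rfl, hi'⟩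
    · exact Or.inl h'
    · exact Or.inr h'
    · by_cases h3 : 3 ≤ l.length
      · obtain rfl : j = l.length - 1 := by omega
        exact absurd h (hend h3)
      · have : j ≠ 0 := by rintro rfl; exact G.irrefl h
        omega
    · by_cases h3 : 3 ≤ l.length
      · obtain rfl : i = l.length - 1 := by omega
        exact absurd h.symm (hend h3)
      · have : i ≠ 0 := by rintro rfl; exact G.irrefl h
        omega
  · rintro (rfl | rfl)
    · exact hch.getElem i hj
    · exact (hch.getElem j hi).symm

lemma nonempty_iso_cycleGraph (hdeg : G.MaxDegreeLeTwo) (hnd : l.Nodup) (hch : l.IsChain G.Adj)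
    (hcov : ∀ v, v ∈ l) (h3 : 3 ≤ l.length) (hend : G.Adj l[0] l[l.length - 1]) :
    Nonempty (G ≃g cycleGraph l.length) := by
  let e : Fin l.length ≃ V := .ofBijective _ (List.Nodup.getBijectionOfForallMemList l hnd hcov).2
  refine ⟨(RelIso.mk e fun {i j} => ?_).symm⟩
  rw [cycleGraph_adj', Fin.val_sub_eq_one_iff (by omega), Fin.val_sub_eq_one_iff (by omega)]
  obtain ⟨i, hi⟩ := i
  obtain ⟨j, hj⟩ := j
  simp only [e, Equiv.ofBijective_apply, List.Nodup.getBijectionOfForallMemList_coe,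
    List.get_eq_getElem]
  refine ⟨fun h => by have := adj_getElem_cases hdeg hnd hch hi hj h; omega, ?_⟩
  rintro ((rfl | ⟨hj', rfl⟩) | (rfl | ⟨hi', rfl⟩))
  · exact (hch.getElem j hi).symm
  · obtain rfl : j = l.length - 1 := by omega
    exact hend
  · exact hch.getElem i hj
  · obtain rfl : i = l.length - 1 := by omega
    exact hend.symm

theorem exists_iso_pathGraph_or_cycleGraph [Finite V] (hconn : G.Connected)
    (hdeg : G.MaxDegreeLeTwo) :
    (∃ n : ℕ, Nonempty (G ≃g pathGraph n)) ∨
    (∃ n : ℕ, 3 ≤ n ∧ Nonempty (G ≃g cycleGraph n)) := by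
  obtain ⟨l, hnd, hch, hmax⟩ := exists_isChain_length_max G
  have hcov := mem_of_isChain_length_max hconn hdeg hnd hch hmax
  by_cases hcyc : ∃ h : 3 ≤ l.length, G.Adj l[0] l[l.length - 1]
  · obtain ⟨h3, hend⟩ := hcyc
    exact .inr ⟨l.length, h3, nonempty_iso_cycleGraph hdeg hnd hch hcov h3 hend⟩
  · push Not at hcyc
    exact .inl ⟨l.length, nonempty_iso_pathGraph hdeg hnd hch hcov hcyc⟩

end LongestPath

end SimpleGraph

/-- every finite connected claw-free and paw-free graph containing an
induced path on 4 vertices is isomorphic to a path or to a cycle. -/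
theorem stmt19 {V : Type*} [Fintype V] (G : SimpleGraph V)
    (hconn : G.Connected)
    (hclaw : IsEmpty (claw ↪g G))
    (hpaw : IsEmpty (paw ↪g G))
    (hP4 : Nonempty (SimpleGraph.pathGraph 4 ↪g G)) :
    (∃ n : ℕ, Nonempty (G ≃g SimpleGraph.pathGraph n)) ∨
    (∃ n : ℕ, 3 ≤ n ∧ Nonempty (G ≃g SimpleGraph.cycleGraph n)) := by
  obtain ⟨e⟩ := hP4
  have htri := SimpleGraph.forall_not_inTriangle_of_paw_free hconn hpaw e
  exact SimpleGraph.exists_iso_pathGraph_or_cycleGraph hconn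
    (SimpleGraph.maxDegreeLeTwo_of_claw_free hclaw htri)
end
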